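/- arXiv:1107.2170 — 4 statements merged into one kernel-verified Lean document; each statement's English description precedes it below -/
import Mathlib

section
/- For a connected graph G with diametrical path P, diam(G) ≤ mr^-(P) ≤ mr^-(G). -/
open Matrix SimpleGraph

attribute [local instance] Classical.propDecidable

/-- The set of real skew-symmetric matrices whose off-diagonal zero-nonzero
pattern is described by the graph `G`. -/
def IsSkewRep {V : Type*} [Fintype V] (G : SimpleGraph V) (A : Matrix V V ℝ) : Prop :=
  Aᵀ = -A ∧ ∀ i j, i ≠ j → (A i j ≠ 0 ↔ G.Adj i j)

/-- The minimum skew rank of a simple graph. -/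
noncomputable def minSkewRank {V : Type*} [Fintype V] (G : SimpleGraph V) : ℕ :=
  sInf {r | ∃ A : Matrix V V ℝ, IsSkewRep G A ∧ A.rank = r}

/-- The maximum skew rank of a simple graph. -/
noncomputable def maxSkewRank {V : Type*} [Fintype V] (G : SimpleGraph V) : ℕ :=
  sSup {r | ∃ A : Matrix V V ℝ, IsSkewRep G A ∧ A.rank = r}

/-- The matching number of a simple graph. -/
noncomputable def matchNum {V : Type*} [Fintype V] (G : SimpleGraph V) : ℕ :=
  sSup {n | ∃ M : G.Subgraph, M.IsMatching ∧ M.edgeSet.ncard = n}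

/-! A path on `m + 1` vertices has skew rank at least `m`: deleting its last row and first column
leaves a lower-triangular matrix whose diagonal holds the (nonzero) edge weights. Skew
representations restrict along induced embeddings, so minimum skew rank is monotone under
induced subgraphs, which gives both inequalities. -/

section SkewRep

variable {V W : Type*} [Fintype V] [Fintype W] {G : SimpleGraph V} {H : SimpleGraph W}

theorem exists_isSkewRep (G : SimpleGraph V) : ∃ A : Matrix V V ℝ, IsSkewRep G A := by
  let : LinearOrder V := LinearOrder.lift' (Fintype.equivFin V) (Equiv.injective _)
  refine ⟨Matrix.of fun i j => if G.Adj i j then (if i < j then 1 else -1) else 0, ?_, ?_⟩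
  · ext i j
    by_cases h : G.Adj i j
    · rcases h.ne.lt_or_gt with hij | hji
      · simp [h, h.symm, hij, hij.not_gt]
      · simp [h, h.symm, hji, hji.not_gt]
    · have h' : ¬G.Adj j i := fun h' => h h'.symm
      simp [h, h']
  · intro i j _
    by_cases h : G.Adj i j
    · by_cases hij : i < j <;> simp [h, hij]
    · simp [h]

theorem IsSkewRep.submatrix {A : Matrix V V ℝ} (hA : IsSkewRep G A) (f : H ↪g G) :
    IsSkewRep H (A.submatrix f f) := by
  refine ⟨?_, fun i j hij => ?_⟩
  · rw [transpose_submatrix, hA.1]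
    rfl
  · exact (hA.2 (f i) (f j) (f.injective.ne hij)).trans f.map_adj_iff

theorem minSkewRank_le_rank {A : Matrix V V ℝ} (hA : IsSkewRep G A) : minSkewRank G ≤ A.rank :=
  Nat.sInf_le ⟨A, hA, rfl⟩

theorem exists_isSkewRep_rank_eq_minSkewRank (G : SimpleGraph V) :
    ∃ A : Matrix V V ℝ, IsSkewRep G A ∧ A.rank = minSkewRank G := by
  obtain ⟨A, hA⟩ := exists_isSkewRep G
  exact Nat.sInf_mem (s := {r | ∃ A : Matrix V V ℝ, IsSkewRep G A ∧ A.rank = r}) ⟨_, A, hA, rfl⟩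

theorem minSkewRank_le_of_embedding (f : H ↪g G) : minSkewRank H ≤ minSkewRank G := by
  obtain ⟨A, hA, hrank⟩ := exists_isSkewRep_rank_eq_minSkewRank G
  calc minSkewRank H ≤ (A.submatrix f f).rank := minSkewRank_le_rank (hA.submatrix f)
    _ ≤ A.rank := rank_submatrix_le A f f
    _ = minSkewRank G := hrank

end SkewRep

theorem IsSkewRep.le_rank_of_pathGraph {m : ℕ} {A : Matrix (Fin (m + 1)) (Fin (m + 1)) ℝ}
    (hA : IsSkewRep (pathGraph (m + 1)) A) : m ≤ A.rank := by
  set C := A.submatrix Fin.castSucc Fin.succ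
  have hdiag : ∀ i, C.diag i ≠ 0 := fun i =>
    (hA.2 _ _ Fin.castSucc_lt_succ.ne).2 (by simp [pathGraph_adj])
  have hlower : C.IsLowerTriangular := fun i j hij => by
    have hij : (i : ℕ) < j := hij
    by_contra hne
    have hadj := (hA.2 _ _ (Fin.ne_of_val_ne (by simp; omega))).1 hne
    simp only [pathGraph_adj, Fin.val_castSucc, Fin.val_succ] at hadj
    omega
  calc m = C.rank := by
        rw [← mul_one C, rank_mul_eq_right_of_isLowerTriangular C 1 hlower hdiag, rank_one,
          Fintype.card_fin]
    _ ≤ A.rank := rank_submatrix_le A _ _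

theorem le_minSkewRank_pathGraph (m : ℕ) : m ≤ minSkewRank (pathGraph (m + 1)) := by
  obtain ⟨A, hA, hrank⟩ := exists_isSkewRep_rank_eq_minSkewRank (pathGraph (m + 1))
  exact hrank ▸ hA.le_rank_of_pathGraph

theorem diam_le_minSkewRank_path_le_general {V : Type*} [Fintype V] (G : SimpleGraph V)
    (s : Set V) (n : ℕ)
    (hpath : Nonempty (G.induce s ≃g pathGraph n)) (hdiam : n = G.diam + 1) :
    G.diam ≤ minSkewRank (G.induce s) ∧ minSkewRank (G.induce s) ≤ minSkewRank G := by
  obtain ⟨e⟩ := hpath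
  subst hdiam
  exact ⟨(le_minSkewRank_pathGraph G.diam).trans (minSkewRank_le_of_embedding e.symm.toEmbedding),
    minSkewRank_le_of_embedding (Embedding.induce s)⟩

/-- For a connected graph `G` with diametrical path `P` (an induced path whose
length equals the diameter of `G`), `diam(G) ≤ mr⁻(P) ≤ mr⁻(G)`. -/
theorem diam_le_minSkewRank_path_le {V : Type*} [Fintype V] (G : SimpleGraph V)
    (hG : G.Connected) (s : Set V) (n : ℕ)
    (hpath : Nonempty (G.induce s ≃g pathGraph n)) (hdiam : n = G.diam + 1) :
    G.diam ≤ minSkewRank (G.induce s) ∧ minSkewRank (G.induce s) ≤ minSkewRank G :=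
  diam_le_minSkewRank_path_le_general G s n hpath hdiam
end

section
/- For the cycle C_n on n ≥ 3 vertices, mr^-(C_n) = n - 2 if n is even and mr^-(C_n) = n - 1 if n is odd. -/
open Matrix SimpleGraph

attribute [local instance] Classical.propDecidable

/-!
On the kernel of a skew representation `A` of `Cₙ`, row `i` of `A x = 0` reads
`A i (i - 1) * x (i - 1) + A i (i + 1) * x (i + 1) = 0` with nonzero coefficients, so `x (i - 1) = 0`
forces `x (i + 1) = 0`. A kernel vector vanishing at `0` and `1` is therefore zero, and for odd `n`
vanishing at `0` already suffices, because steps of `2` reach every vertex; this bounds the nullity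
by `2`, resp. `1`. For odd `n` every skew-symmetric matrix is singular, so all representations have
rank `n - 1`. For even `n`, `P - P⁻¹` with `P` the cyclic shift has the constant and the alternating
vector in its kernel, so it has rank `n - 2`.
-/

open Module

namespace Matrix

variable {ι K : Type*} [Fintype ι]

theorem rank_add_finrank_ker [Field K] (A : Matrix ι ι K) :
    A.rank + finrank K (LinearMap.ker A.mulVecLin) = Fintype.card ι := by
  rw [rank, LinearMap.finrank_range_add_finrank_ker, finrank_fintype_fun_eq_card]

theorem det_eq_zero_of_transpose_eq_neg [DecidableEq ι] [CommRing K] [IsAddTorsionFree K]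
    {A : Matrix ι ι K} (hA : Aᵀ = -A) (hι : Odd (Fintype.card ι)) : A.det = 0 := by
  refine self_eq_neg.mp ?_
  calc A.det = Aᵀ.det := (det_transpose A).symm
    _ = -A.det := by rw [hA, det_neg, hι.neg_one_pow, neg_one_mul]

theorem rank_lt_card_of_det_eq_zero [DecidableEq ι] [Field K] {A : Matrix ι ι K}
    (hA : A.det = 0) : A.rank < Fintype.card ι := by
  obtain ⟨v, hv, hAv⟩ := exists_mulVec_eq_zero_iff.mpr hA
  have : 0 < finrank K (LinearMap.ker A.mulVecLin) :=
    finrank_pos_iff_exists_ne_zero.mpr ⟨⟨v, hAv⟩, fun h => hv (congrArg Subtype.val h)⟩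
  have := A.rank_add_finrank_ker
  omega

end Matrix

theorem Submodule.finrank_le_card_of_eq_zero_of_forall {ι K : Type*} [Field K]
    (W : Submodule K (ι → K)) (s : Finset ι) (hW : ∀ x ∈ W, (∀ i ∈ s, x i = 0) → x = 0) :
    finrank K W ≤ s.card := by
  have hinj : Function.Injective ((LinearMap.funLeft K K ((↑) : s → ι)).comp W.subtype) := by
    rw [← LinearMap.ker_eq_bot, LinearMap.ker_eq_bot']
    rintro ⟨x, hx⟩ hx0
    exact Subtype.ext <| hW x hx fun i hi => congrFun hx0 ⟨i, hi⟩
  simpa using LinearMap.finrank_le_finrank_of_injective hinj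

theorem Fin.neg_one_pow_val_add_one {R : Type*} [Ring R] {n : ℕ} (hn : Even (n + 1))
    (i : Fin (n + 1)) : (-1 : R) ^ ((i + 1 : Fin (n + 1)) : ℕ) = -(-1) ^ (i : ℕ) := by
  rw [Fin.val_add_one]
  split_ifs with h
  · have hodd : Odd n := Nat.not_even_iff_odd.mp (Nat.even_add_one.mp hn)
    simp [h, hodd.neg_one_pow]
  · rw [pow_succ, mul_neg_one]

namespace IsSkewRep

section General

variable {V : Type*} [Fintype V] {G : SimpleGraph V} {A : Matrix V V ℝ}

theorem apply_self (hA : IsSkewRep G A) (i : V) : A i i = 0 := by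
  have : A i i = -A i i := congrFun (congrFun hA.1 i) i
  linarith

theorem apply_ne_zero_iff (hA : IsSkewRep G A) (i j : V) : A i j ≠ 0 ↔ G.Adj i j := by
  rcases eq_or_ne i j with rfl | hij
  · simp [hA.apply_self]
  · exact hA.2 i j hij

theorem mulVec_apply_eq_sum (hA : IsSkewRep G A) (x : V → ℝ) (i : V) {s : Finset V}
    (hs : ∀ j, G.Adj i j → j ∈ s) : (A *ᵥ x) i = ∑ j ∈ s, A i j * x j := by
  refine (Finset.sum_subset (Finset.subset_univ s) fun j _ hj => ?_).symm
  change A i j * x j = 0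
  rw [not_ne_iff.mp (mt (hA.apply_ne_zero_iff i j).mp (mt (hs j) hj)), zero_mul]

theorem rank_lt_card_of_odd (hA : IsSkewRep G A) (hV : Odd (Fintype.card V)) :
    A.rank < Fintype.card V :=
  rank_lt_card_of_det_eq_zero (det_eq_zero_of_transpose_eq_neg hA.1 hV)

end General

section Cycle

open Fin.NatCast Fin.CommRing

variable {n : ℕ} {A : Matrix (Fin (n + 2)) (Fin (n + 2)) ℝ} {x : Fin (n + 2) → ℝ}

theorem eq_zero_add_one_of_mulVec_eq_zero (hA : IsSkewRep (cycleGraph (n + 2)) A)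
    (hx : A *ᵥ x = 0) {i : Fin (n + 2)} (hi : x (i - 1) = 0) : x (i + 1) = 0 := by
  have hrow : (A *ᵥ x) i = A i (i + 1) * x (i + 1) := by
    rw [hA.mulVec_apply_eq_sum x i (s := {i - 1, i + 1}), Finset.sum_insert_zero (by simp [hi]),
      Finset.sum_singleton]
    intro j hj
    simpa [← mem_neighborSet, cycleGraph_neighborSet] using hj
  rw [hx, Pi.zero_apply, eq_comm] at hrow
  exact (mul_eq_zero.mp hrow).resolve_left <|
    (hA.apply_ne_zero_iff i (i + 1)).mpr (by simp [cycleGraph_adj])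

theorem eq_zero_add_two_mul_of_mulVec_eq_zero (hA : IsSkewRep (cycleGraph (n + 2)) A)
    (hx : A *ᵥ x = 0) {i : Fin (n + 2)} (hi : x i = 0) (k : ℕ) : x (i + (2 * k : ℕ)) = 0 := by
  induction k with
  | zero => simpa using hi
  | succ k ih =>
    have := hA.eq_zero_add_one_of_mulVec_eq_zero hx (i := i + 2 * k + 1) (by simpa using ih)
    convert this using 2
    push_cast
    ring

theorem eq_zero_of_mulVec_eq_zero (hA : IsSkewRep (cycleGraph (n + 2)) A)
    (hx : A *ᵥ x = 0) (h₀ : x 0 = 0) (h₁ : x 1 = 0) : x = 0 := by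
  have key (k : ℕ) : x k = 0 ∧ x (k + 1) = 0 := by
    induction k with
    | zero => simpa using ⟨h₀, h₁⟩
    | succ k ih =>
      refine ⟨by exact_mod_cast ih.2, ?_⟩
      exact_mod_cast hA.eq_zero_add_one_of_mulVec_eq_zero hx (i := k + 1) (by simpa using ih.1)
  funext j
  simpa using (key j).1

theorem eq_zero_of_mulVec_eq_zero_of_odd (hA : IsSkewRep (cycleGraph (n + 2)) A)
    (hn : Odd (n + 2)) (hx : A *ᵥ x = 0) (h₀ : x 0 = 0) : x = 0 := by
  funext j
  -- `(n + 3) / 2` is the inverse of `2` modulo the odd number `n + 2`.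
  have hj : j = 0 + ((2 * ((n + 3) / 2 * j) : ℕ) : Fin (n + 2)) := by
    have h2 : 2 * ((n + 3) / 2) = (n + 2) + 1 := by obtain ⟨m, hm⟩ := hn; omega
    rw [zero_add, ← mul_assoc, h2, add_mul, one_mul, Nat.cast_add, Nat.cast_mul,
      Fin.natCast_self, zero_mul, zero_add, Fin.cast_val_eq_self]
  rw [hj]
  exact hA.eq_zero_add_two_mul_of_mulVec_eq_zero hx h₀ _

theorem le_rank_of_cycleGraph (hA : IsSkewRep (cycleGraph (n + 2)) A) : n ≤ A.rank := by
  have hker : finrank ℝ (LinearMap.ker A.mulVecLin) ≤ 2 := by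
    have := Submodule.finrank_le_card_of_eq_zero_of_forall (LinearMap.ker A.mulVecLin) {0, 1}
      fun x (hx : A *ᵥ x = 0) h₀₁ =>
        hA.eq_zero_of_mulVec_eq_zero hx (h₀₁ 0 (by simp)) (h₀₁ 1 (by simp))
    rwa [Finset.card_pair (by simp)] at this
  have := A.rank_add_finrank_ker
  rw [Fintype.card_fin] at this
  omega

theorem le_rank_of_cycleGraph_of_odd (hA : IsSkewRep (cycleGraph (n + 2)) A)
    (hn : Odd (n + 2)) : n + 1 ≤ A.rank := by
  have hker : finrank ℝ (LinearMap.ker A.mulVecLin) ≤ 1 :=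
    Submodule.finrank_le_card_of_eq_zero_of_forall (LinearMap.ker A.mulVecLin) {0}
      fun x (hx : A *ᵥ x = 0) h₀ => hA.eq_zero_of_mulVec_eq_zero_of_odd hn hx (h₀ 0 (by simp))
  have := A.rank_add_finrank_ker
  rw [Fintype.card_fin] at this
  omega

end Cycle

end IsSkewRep

noncomputable def cycleSkewMatrix (n : ℕ) : Matrix (Fin n) (Fin n) ℝ :=
  (finRotate n).permMatrix ℝ - (finRotate n)⁻¹.permMatrix ℝ

section cycleSkewMatrix

open Fin.CommRing

section NeZero

variable {n : ℕ} [NeZero n]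

theorem cycleSkewMatrix_apply (i j : Fin n) :
    cycleSkewMatrix n i j = (if j = i + 1 then 1 else 0) - (if j = i - 1 then 1 else 0) := by
  have hinv : (finRotate n)⁻¹ i = i - 1 := finRotate_symm_apply i
  simp [cycleSkewMatrix, PEquiv.toMatrix_apply, hinv, eq_comm]

theorem cycleSkewMatrix_mulVec_apply (x : Fin n → ℝ) (i : Fin n) :
    (cycleSkewMatrix n *ᵥ x) i = x (i + 1) - x (i - 1) := by
  simp [cycleSkewMatrix, sub_mulVec, permMatrix_mulVec]

end NeZero

variable {n : ℕ}

theorem isSkewRep_cycleSkewMatrix :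
    IsSkewRep (cycleGraph (n + 3)) (cycleSkewMatrix (n + 3)) := by
  refine ⟨by simp [cycleSkewMatrix], fun i j _ => ?_⟩
  have h2 : i + 1 ≠ i - 1 := by
    intro h
    have : (2 : Fin (n + 3)) = 0 := by linear_combination h
    simp [Fin.ext_iff, Nat.mod_eq_of_lt (show 2 < n + 3 by omega)] at this
  rw [cycleSkewMatrix_apply, ← mem_neighborSet, cycleGraph_neighborSet]
  rcases eq_or_ne j (i + 1) with rfl | hp
  · simp [h2]
  rcases eq_or_ne j (i - 1) with rfl | hm
  · rw [if_neg h2.symm]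
    simp
  · simp [hp, hm]

theorem rank_cycleSkewMatrix_le_of_even (hn : Even (n + 2)) :
    (cycleSkewMatrix (n + 2)).rank ≤ n := by
  set w : Fin (n + 2) → ℝ := fun i => (-1) ^ (i : ℕ)
  have hw (i : Fin (n + 2)) : w (i + 1) = -w i := Fin.neg_one_pow_val_add_one hn i
  have hw' (i : Fin (n + 2)) : w (i - 1) = -w i := by
    rw [← neg_neg (w (i - 1)), ← hw, sub_add_cancel]
  have hli : LinearIndependent ℝ ![1, w] := by
    refine LinearIndependent.pair_iff.mpr fun s t hst => ?_
    have h₀ : s + t = 0 := by simpa [w] using congrFun hst 0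
    have h₁ : s - t = 0 := by simpa [w, sub_eq_add_neg] using congrFun hst 1
    constructor <;> linarith
  have hspan : Submodule.span ℝ (Set.range ![1, w]) ≤
      LinearMap.ker (cycleSkewMatrix (n + 2)).mulVecLin := by
    rw [Submodule.span_le, Set.range_subset_iff]
    intro k
    fin_cases k <;> ext i <;> simp [cycleSkewMatrix_mulVec_apply, hw, hw']
  have hker := Submodule.finrank_mono hspan
  rw [finrank_span_eq_card hli, Fintype.card_fin] at hker
  have := (cycleSkewMatrix (n + 2)).rank_add_finrank_ker
  rw [Fintype.card_fin] at this
  omega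

end cycleSkewMatrix

theorem minSkewRank_eq_of_forall_le {V : Type*} [Fintype V] {G : SimpleGraph V}
    {A : Matrix V V ℝ} {r : ℕ} (hA : IsSkewRep G A) (hAr : A.rank ≤ r)
    (h : ∀ B, IsSkewRep G B → r ≤ B.rank) : minSkewRank G = r :=
  le_antisymm (Nat.sInf_le ⟨A, hA, le_antisymm hAr (h A hA)⟩)
    (le_csInf ⟨A.rank, A, hA, rfl⟩ fun _ ⟨B, hB, hBr⟩ => hBr ▸ h B hB)

/-- The minimum skew rank of the cycle `Cₙ` (`n ≥ 3`) is `n - 2` if `n` is even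
and `n - 1` if `n` is odd. -/
theorem minSkewRank_cycleGraph (n : ℕ) (hn : 3 ≤ n) :
    minSkewRank (cycleGraph n) = if Even n then n - 2 else n - 1 := by
  obtain ⟨n, rfl⟩ := Nat.exists_eq_add_of_le' hn
  split_ifs with hev
  · exact minSkewRank_eq_of_forall_le isSkewRep_cycleSkewMatrix
      (rank_cycleSkewMatrix_le_of_even (n := n + 1) hev)
      fun B hB => hB.le_rank_of_cycleGraph (n := n + 1)
  · have hodd : Odd (n + 3) := Nat.not_even_iff_odd.mp hev
    have hrank := isSkewRep_cycleSkewMatrix.rank_lt_card_of_odd (by simpa using hodd)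
    rw [Fintype.card_fin] at hrank
    exact minSkewRank_eq_of_forall_le isSkewRep_cycleSkewMatrix (by omega)
      fun B hB => hB.le_rank_of_cycleGraph_of_odd (n := n + 1) hodd
end

section
/- If U is the n-sun, obtained from C_n by appending exactly one pendant leaf to every vertex of the cycle, then U has a unique perfect matching and mr^-(U) = 2n. -/
/-!
Every cycle vertex `inl a` of the sun carries a leaf `inr a`. A perfect matching must match
each leaf to its only neighbour, and these edges already cover every vertex, so the matching is
unique. If `A` is a skew representation and `A *ᵥ v = 0`, the row of a leaf `inr a` forces
`v (inl a) = 0`; the row of `inl a` then forces `v (inr a) = 0`, since among the `inr b` only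
`inr a` is adjacent to it. So every skew representation is invertible and has rank `2n`.
-/

open Matrix SimpleGraph

attribute [local instance] Classical.propDecidable

/-- The `n`-sun: the graph obtained from the cycle `Cₙ` by attaching one
pendant leaf to every cycle vertex. -/
def sunGraph (n : ℕ) : SimpleGraph ((Fin n) ⊕ (Fin n)) :=
  SimpleGraph.fromRel (fun x y =>
    match x, y with
    | Sum.inl a, Sum.inl b => (cycleGraph n).Adj a b
    | Sum.inl a, Sum.inr b => a = b
    | _, _ => False)

open Sum

section SkewRep

variable {V : Type*} [Fintype V] {G : SimpleGraph V} {A : Matrix V V ℝ}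

theorem IsSkewRep.apply_self_s14 (hA : IsSkewRep G A) (i : V) : A i i = 0 := by
  have h : A i i = -A i i := congrFun (congrFun hA.1 i) i
  linarith

theorem IsSkewRep.apply_eq_zero_of_not_adj (hA : IsSkewRep G A) {i j : V} (h : ¬G.Adj i j) :
    A i j = 0 := by
  by_cases hij : i = j
  · exact hij ▸ hA.apply_self_s14 i
  · by_contra hne
    exact h ((hA.2 i j hij).mp hne)

theorem IsSkewRep.apply_ne_zero_of_adj (hA : IsSkewRep G A) {i j : V} (h : G.Adj i j) :
    A i j ≠ 0 :=
  (hA.2 i j h.ne).mpr h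

noncomputable def orientedAdjMatrix (G : SimpleGraph V) : Matrix V V ℝ :=
  fun i j => if G.Adj i j then
    (if Fintype.equivFin V i < Fintype.equivFin V j then 1 else -1) else 0

theorem isSkewRep_orientedAdjMatrix (G : SimpleGraph V) : IsSkewRep G (orientedAdjMatrix G) := by
  refine ⟨?_, fun i j _ => ?_⟩
  · ext i j
    by_cases h : G.Adj i j
    · have hne : Fintype.equivFin V i ≠ Fintype.equivFin V j :=
        (Fintype.equivFin V).injective.ne h.ne
      rcases hne.lt_or_gt with hlt | hlt <;>
        simp [orientedAdjMatrix, h, h.symm, hlt, not_lt_of_gt hlt]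
    · have h' : ¬G.Adj j i := fun h' => h h'.symm
      simp [orientedAdjMatrix, h, h']
  · by_cases h : G.Adj i j
    · simp only [orientedAdjMatrix, h, if_true, iff_true]
      split_ifs <;> norm_num
    · simp [orientedAdjMatrix, h]

theorem minSkewRank_eq_of_forall_rank_eq {r : ℕ} (h : ∀ A, IsSkewRep G A → A.rank = r) :
    minSkewRank G = r := by
  have hset : {s | ∃ A : Matrix V V ℝ, IsSkewRep G A ∧ A.rank = s} = {r} := by
    ext s
    refine ⟨fun ⟨A, hA, hs⟩ => hs ▸ h A hA, fun hs => ?_⟩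
    have hrep := isSkewRep_orientedAdjMatrix G
    exact ⟨_, hrep, (h _ hrep).trans hs.symm⟩
  rw [minSkewRank, hset, csInf_singleton]

end SkewRep

section Pendant

variable {α : Type*} {G : SimpleGraph (α ⊕ α)}

def sumSwapGraph (α : Type*) : SimpleGraph (α ⊕ α) where
  Adj x y := y = x.swap
  symm := ⟨fun x y h => by simp [h]⟩
  loopless := ⟨fun x h => by cases x <;> simp at h⟩

theorem sumSwapGraph_le (hleaf : ∀ a j, G.Adj (inr a) j ↔ j = inl a) :
    sumSwapGraph α ≤ G := by
  intro x y (h : y = x.swap)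
  subst h
  rcases x with a | a
  · exact ((hleaf a (inl a)).mpr rfl).symm
  · exact (hleaf a _).mpr rfl

theorem SimpleGraph.Subgraph.IsPerfectMatching.adj_iff_eq_swap {M : G.Subgraph}
    (hM : M.IsPerfectMatching) (hleaf : ∀ a j, G.Adj (inr a) j ↔ j = inl a) {x y : α ⊕ α} :
    M.Adj x y ↔ y = x.swap := by
  have hr : ∀ a y, M.Adj (inr a) y ↔ y = inl a := by
    intro a y
    obtain ⟨w, hw, hw_uniq⟩ := Subgraph.isPerfectMatching_iff.mp hM (inr a)
    have hwa : w = inl a := (hleaf a w).mp (M.adj_sub hw)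
    exact ⟨fun hy => (hw_uniq y hy).trans hwa, fun hy => hy ▸ hwa ▸ hw⟩
  rcases x with a | a
  · obtain ⟨w, -, hw_uniq⟩ := Subgraph.isPerfectMatching_iff.mp hM (inl a)
    have hmate : M.Adj (inl a) (inr a) := ((hr a _).mpr rfl).symm
    exact ⟨fun hy => (hw_uniq y hy).trans (hw_uniq _ hmate).symm, fun hy => hy ▸ hmate⟩
  · exact hr a y

theorem existsUnique_isPerfectMatching_of_pendant (hleaf : ∀ a j, G.Adj (inr a) j ↔ j = inl a) :
    ∃! M : G.Subgraph, M.IsPerfectMatching := by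
  refine ⟨SimpleGraph.toSubgraph (sumSwapGraph α) (sumSwapGraph_le hleaf), ?_,
    fun M (hM : M.IsPerfectMatching) => ?_⟩
  · exact Subgraph.isPerfectMatching_iff.mpr fun x => ⟨x.swap, rfl, fun _ h => h⟩
  · ext x y
    · simp [hM.2 x]
    · exact hM.adj_iff_eq_swap hleaf

theorem IsSkewRep.isUnit_of_pendant [Fintype α] {A : Matrix (α ⊕ α) (α ⊕ α) ℝ}
    (hA : IsSkewRep G A) (hleaf : ∀ a j, G.Adj (inr a) j ↔ j = inl a) : IsUnit A := by
  refine mulVec_injective_iff_isUnit.mp <| (injective_iff_map_eq_zero A.mulVecLin).mpr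
    fun v hv => ?_
  have hrow : ∀ i, ∑ j, A i j * v j = 0 := fun i => congrFun hv i
  have hl : ∀ a, v (inl a) = 0 := by
    intro a
    have h := hrow (inr a)
    rw [Finset.sum_eq_single (inl a) (fun j _ hj => by
      rw [hA.apply_eq_zero_of_not_adj (mt (hleaf a j).mp hj), zero_mul]) (by simp)] at h
    exact (mul_eq_zero.mp h).resolve_left (hA.apply_ne_zero_of_adj ((hleaf a _).mpr rfl))
  have hr : ∀ a, v (inr a) = 0 := by
    intro a
    have h := hrow (inl a)
    rw [Finset.sum_eq_single (inr a) (fun j _ hj => ?_) (by simp)] at h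
    · exact (mul_eq_zero.mp h).resolve_left
        (hA.apply_ne_zero_of_adj ((hleaf a _).mpr rfl).symm)
    rcases j with b | b
    · rw [hl b, mul_zero]
    · have hab : ¬G.Adj (inl a) (inr b) := fun h =>
        hj (congrArg inr (inl.inj ((hleaf b _).mp h.symm)).symm)
      rw [hA.apply_eq_zero_of_not_adj hab, zero_mul]
  ext (a | a)
  exacts [hl a, hr a]

theorem minSkewRank_eq_of_pendant [Fintype α] (hleaf : ∀ a j, G.Adj (inr a) j ↔ j = inl a) :
    minSkewRank G = 2 * Fintype.card α :=
  minSkewRank_eq_of_forall_rank_eq fun A hA => by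
    rw [rank_of_isUnit A (hA.isUnit_of_pendant hleaf), Fintype.card_sum, two_mul]

end Pendant

theorem sunGraph_adj_inr {n : ℕ} (a : Fin n) (j : Fin n ⊕ Fin n) :
    (sunGraph n).Adj (inr a) j ↔ j = inl a := by
  cases j <;> simp [sunGraph, eq_comm]

theorem minSkewRank_sun_general (n : ℕ) :
    (∃! M : (sunGraph n).Subgraph, M.IsPerfectMatching) ∧
      minSkewRank (sunGraph n) = 2 * n := by
  refine ⟨existsUnique_isPerfectMatching_of_pendant sunGraph_adj_inr, ?_⟩
  rw [minSkewRank_eq_of_pendant sunGraph_adj_inr, Fintype.card_fin]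

/-- The `n`-sun has a unique perfect matching, and its minimum skew rank is `2n`. -/
theorem minSkewRank_sun (n : ℕ) (hn : 3 ≤ n) :
    (∃! M : (sunGraph n).Subgraph, M.IsPerfectMatching) ∧
      minSkewRank (sunGraph n) = 2 * n :=
  minSkewRank_sun_general n
end

section
/- Let T be a tree with diametrical path P_n where n is odd. Then mr^-(T) = mr^-(P_n) if and only if T is a regular centipede whose joints are all even-indexed vertices of P_n. -/
open Matrix SimpleGraph

attribute [local instance] Classical.propDecidable

/-- `v` enumerates the vertices of an induced path `v 0 — v 1 — ⋯ — v (n-1)` in `T`. -/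
def IsInducedPathEnum {V : Type*} (T : SimpleGraph V) {n : ℕ} (v : Fin n → V) : Prop :=
  Function.Injective v ∧ ∀ i j : Fin n, T.Adj (v i) (v j) ↔ (pathGraph n).Adj i j

/-- `v` enumerates a diametrical path of `T`: an induced path of length `diam T`. -/
def IsDiametricalPathEnum {V : Type*} [Fintype V] (T : SimpleGraph V) {n : ℕ}
    (v : Fin n → V) : Prop :=
  IsInducedPathEnum T v ∧ n = T.diam + 1

/-- `T` is a centipede with spine the path enumerated by `v`: every vertex off
the spine is a pendant vertex (a leg) attached to a nonpendant spine vertex. -/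
def IsCentipedeOn {V : Type*} [Fintype V] (T : SimpleGraph V) {n : ℕ} (v : Fin n → V) : Prop :=
  ∀ w : V, w ∉ Set.range v →
    (T.neighborSet w).ncard = 1 ∧
    ∃ i : Fin n, T.Adj w (v i) ∧ i.val ≠ 0 ∧ i.val ≠ n - 1

/-- The spine vertex `v i` is a joint: it has a leg attached. -/
def IsJoint {V : Type*} (T : SimpleGraph V) {n : ℕ} (v : Fin n → V) (i : Fin n) : Prop :=
  ∃ w : V, w ∉ Set.range v ∧ T.Adj (v i) w

/-- The centipede is regular: no two consecutive spine vertices are joints. -/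
def IsRegularOn {V : Type*} (T : SimpleGraph V) {n : ℕ} (v : Fin n → V) : Prop :=
  ∀ i j : Fin n, IsJoint T v i → IsJoint T v j → i.val + 1 ≠ j.val


set_option linter.unusedSectionVars false
namespace Work
variable {V : Type*} [Fintype V] {T : SimpleGraph V}


lemma diag_zero {T : SimpleGraph V} {A : Matrix V V ℝ} (h : IsSkewRep T A) (x : V) :
    A x x = 0 := by
  have := congrFun (congrFun h.1 x) x
  simp only [Matrix.transpose_apply, Matrix.neg_apply] at this
  linarith

lemma off_zero {T : SimpleGraph V} {A : Matrix V V ℝ} (h : IsSkewRep T A) {x y : V}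
    (hne : x ≠ y) (hadj : ¬ T.Adj x y) : A x y = 0 := by
  by_contra h0
  exact hadj ((h.2 x y hne).1 h0)

lemma rank_submatrix_le' {ι : Type*} [Fintype ι] [DecidableEq ι] [DecidableEq V]
    (A : Matrix V V ℝ) (r c : ι → V) : (A.submatrix r c).rank ≤ A.rank := by
  have hE : A.submatrix r c =
      (Matrix.of fun (p : ι) (x : V) => if x = r p then (1:ℝ) else 0) * A *
      (Matrix.of fun (y : V) (q : ι) => if y = c q then (1:ℝ) else 0) := by
    ext p q
    simp only [Matrix.mul_apply, Matrix.of_apply, Matrix.submatrix_apply]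
    simp [ite_mul, mul_ite, Finset.sum_ite_eq']
  rw [hE]
  exact le_trans (Matrix.rank_mul_le_left _ _) (Matrix.rank_mul_le_right _ _)

lemma rank_ge_of_system {T : SimpleGraph V} {A : Matrix V V ℝ} (hA : IsSkewRep T A)
    {ι : Type*} [Fintype ι] [DecidableEq ι] (r c : ι → V) (κ : ι → ℕ)
    (hdiag : ∀ i, T.Adj (r i) (c i))
    (hstrict : ∀ i j, i ≠ j → T.Adj (r i) (c j) → r i ≠ c j → κ j < κ i) :
    Fintype.card ι ≤ A.rank := by
  classical
  set M := A.submatrix r c with hM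
  have hzero : ∀ i j : ι, κ i < κ j → M i j = 0 := by
    intro i j hij
    have hne : i ≠ j := by rintro rfl; exact lt_irrefl _ hij
    by_cases he : r i = c j
    · show A (r i) (c j) = 0
      rw [he]; exact diag_zero hA _
    by_cases hadj : T.Adj (r i) (c j)
    · exact absurd hij (not_lt.2 (le_of_lt (hstrict i j hne hadj he)))
    · exact off_zero hA he hadj
  have hBT : Mᵀ.BlockTriangular κ := fun i j h => hzero j i h
  have hblock : ∀ a : ℕ, (Mᵀ.toSquareBlock κ a).det ≠ 0 := by
    intro a
    have hdiagform : (Mᵀ.toSquareBlock κ a) =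
        Matrix.diagonal (fun p : {i // κ i = a} => A (r p.1) (c p.1)) := by
      ext p q
      by_cases hpq : p = q
      · subst hpq
        simp only [Matrix.toSquareBlock_def, Matrix.submatrix_apply,
          Matrix.transpose_apply, Matrix.diagonal_apply_eq]
        rfl
      · have hpq' : (p : ι) ≠ (q : ι) := fun h => hpq (Subtype.ext h)
        simp only [Matrix.toSquareBlock_def, Matrix.diagonal, Matrix.of_apply,
          Matrix.transpose_apply, hpq, if_neg]
        -- Mᵀ p q = M q p = A (r q) (c p)
        show M (q : ι) (p : ι) = 0
        by_contra h0
        have he : r (q:ι) ≠ c (p:ι) := by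
          intro h
          apply h0
          show A (r (q:ι)) (c (p:ι)) = 0
          rw [h]; exact diag_zero hA _
        have hadj : T.Adj (r (q:ι)) (c (p:ι)) := by
          by_contra hna
          exact h0 (off_zero hA he hna)
        have := hstrict (q:ι) (p:ι) (fun h => hpq (Subtype.ext h).symm) hadj he
        rw [p.2, q.2] at this
        exact lt_irrefl _ this
    rw [hdiagform, Matrix.det_diagonal]
    apply Finset.prod_ne_zero_iff.2
    intro p _
    exact (hA.2 (r p.1) (c p.1) (hdiag p.1).ne).2 (hdiag p.1)
  have hdet : M.det ≠ 0 := by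
    rw [← Matrix.det_transpose, hBT.det]
    exact Finset.prod_ne_zero_iff.2 fun a _ => hblock a
  have hunit : IsUnit M := (Matrix.isUnit_iff_isUnit_det M).2 (isUnit_iff_ne_zero.2 hdet)
  calc Fintype.card ι = M.rank := (Matrix.rank_of_isUnit M hunit).symm
    _ ≤ A.rank := rank_submatrix_le' A r c



lemma exists_rep_rank_le {T : SimpleGraph V} {n : ℕ} (hn : Odd n) (v : Fin n → V)
    (hinj : Function.Injective v)
    (hadj : ∀ i j, T.Adj (v i) (v j) ↔ (pathGraph n).Adj i j)
    (hoff : ∀ w : V, w ∉ Set.range v → (T.neighborSet w).ncard = 1 ∧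
        ∃ i : Fin n, T.Adj w (v i) ∧ Odd i.val) :
    ∃ A : Matrix V V ℝ, IsSkewRep T A ∧ A.rank ≤ n - 1 := by
  classical
  have npos : 0 < n := hn.pos
  -- the canonical attachment index for off-spine vertices
  set jIdx : V → Fin n := fun w =>
    if h : w ∉ Set.range v then Classical.choose (hoff w h).2 else ⟨0, npos⟩ with hjIdx
  have jspec : ∀ w (h : w ∉ Set.range v), T.Adj w (v (jIdx w)) ∧ Odd (jIdx w).val := by
    intro w h
    have := Classical.choose_spec (hoff w h).2
    simp only [hjIdx, dif_pos h]
    exact ⟨this.1, this.2⟩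
  have nb_eq : ∀ w, w ∉ Set.range v → ∀ x, T.Adj w x → x = v (jIdx w) := by
    intro w hw x hx
    obtain ⟨a, ha⟩ := Set.ncard_eq_one.1 (hoff w hw).1
    have h1 : x ∈ T.neighborSet w := hx
    have h2 : v (jIdx w) ∈ T.neighborSet w := (jspec w hw).1
    rw [ha] at h1 h2
    rw [Set.mem_singleton_iff] at h1 h2
    rw [h1, h2]
  -- spine and leg conditions
  set SC : V → V → Prop := fun x y => ∃ i j : Fin n, (j : ℕ) = (i : ℕ) + 1 ∧ x = v i ∧ y = v j
    with hSC
  set LC : V → V → Prop := fun x y => y ∉ Set.range v ∧ x = v (jIdx y) with hLC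
  set c : V → V → ℝ := fun x y => (if SC x y then 1 else 0) + (if LC x y then 1 else 0) with hc
  set A : Matrix V V ℝ := Matrix.of fun x y => c x y - c y x with hA
  have hAapp : ∀ x y, A x y = c x y - c y x := fun x y => rfl
  have c_of : ∀ x y, c x y = (if SC x y then (1:ℝ) else 0) + (if LC x y then 1 else 0) :=
    fun _ _ => rfl
  -- basic facts
  have SC_adj : ∀ x y, SC x y → T.Adj x y := by
    rintro x y ⟨i, j, hij, rfl, rfl⟩
    rw [hadj]
    rw [pathGraph_adj]
    left; omega
  have LC_adj : ∀ x y, LC x y → T.Adj x y := by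
    rintro x y ⟨hy, rfl⟩
    exact ((jspec y hy).1).symm
  have c_cases : ∀ x y, c x y = 0 ∨ (c x y = 1 ∧ (SC x y ∨ LC x y)) := by
    intro x y
    by_cases h1 : SC x y
    · right
      constructor
      · have h2 : ¬ LC x y := by
          rintro ⟨hy, -⟩
          obtain ⟨i, j, hij, hx, rfl⟩ := h1
          exact hy ⟨j, rfl⟩
        rw [c_of, if_pos h1, if_neg h2]; norm_num
      · exact Or.inl h1
    by_cases h2 : LC x y
    · right
      constructor
      · rw [c_of, if_neg h1, if_pos h2]; norm_num
      · exact Or.inr h2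
    · left
      rw [c_of, if_neg h1, if_neg h2]; norm_num
  have hskew : IsSkewRep T A := by
    constructor
    · ext x y
      simp only [Matrix.transpose_apply, Matrix.neg_apply, hAapp]
      ring
    · intro x y hxy
      constructor
      · intro h0
        rw [hAapp] at h0
        have : c x y ≠ 0 ∨ c y x ≠ 0 := by
          by_contra h
          push_neg at h
          rw [h.1, h.2] at h0
          simp at h0
        rcases this with h | h
        · rcases c_cases x y with h' | ⟨-, h'⟩
          · exact absurd h' h
          · rcases h' with h' | h'
            · exact SC_adj x y h'
            · exact LC_adj x y h'
        · rcases c_cases y x with h' | ⟨-, h'⟩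
          · exact absurd h' h
          · rcases h' with h' | h'
            · exact (SC_adj y x h').symm
            · exact (LC_adj y x h').symm
      · intro hAdj
        rw [hAapp]
        -- case analysis on membership in the spine
        by_cases hx : x ∈ Set.range v <;> by_cases hy : y ∈ Set.range v
        · obtain ⟨i, rfl⟩ := hx
          obtain ⟨j, rfl⟩ := hy
          have hpg := (hadj i j).1 hAdj
          rw [pathGraph_adj] at hpg
          rcases hpg with hij | hij
          · have h1 : SC (v i) (v j) := ⟨i, j, hij.symm, rfl, rfl⟩
            have h2 : ¬ SC (v j) (v i) := by
              rintro ⟨i', j', hij', h1', h2'⟩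
              have e1 : i' = j := hinj h1'.symm
              have e2 : j' = i := hinj h2'.symm
              subst e1; subst e2
              omega
            have h3 : ¬ LC (v i) (v j) := fun h => h.1 ⟨j, rfl⟩
            have h4 : ¬ LC (v j) (v i) := fun h => h.1 ⟨i, rfl⟩
            rw [c_of, c_of, if_pos h1, if_neg h2, if_neg h3, if_neg h4]; norm_num
          · have h1 : SC (v j) (v i) := ⟨j, i, hij.symm, rfl, rfl⟩
            have h2 : ¬ SC (v i) (v j) := by
              rintro ⟨i', j', hij', h1', h2'⟩
              have e1 : i' = i := hinj h1'.symm
              have e2 : j' = j := hinj h2'.symm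
              subst e1; subst e2
              omega
            have h3 : ¬ LC (v i) (v j) := fun h => h.1 ⟨j, rfl⟩
            have h4 : ¬ LC (v j) (v i) := fun h => h.1 ⟨i, rfl⟩
            rw [c_of, c_of, if_neg h2, if_pos h1, if_neg h3, if_neg h4]; norm_num
        · -- x on spine, y off spine
          have h1 : LC x y := ⟨hy, nb_eq y hy x hAdj.symm⟩
          have h2 : ¬ SC x y := by rintro ⟨i, j, -, -, rfl⟩; exact hy ⟨j, rfl⟩
          have h3 : ¬ SC y x := by rintro ⟨i, j, -, rfl, -⟩; exact hy ⟨i, rfl⟩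
          have h4 : ¬ LC y x := by
            rintro ⟨hx', -⟩
            exact hx' hx
          rw [c_of, c_of, if_neg h2, if_pos h1, if_neg h3, if_neg h4]; norm_num
        · have h1 : LC y x := ⟨hx, nb_eq x hx y hAdj⟩
          have h2 : ¬ SC x y := by rintro ⟨i, j, -, rfl, -⟩; exact hx ⟨i, rfl⟩
          have h3 : ¬ SC y x := by rintro ⟨i, j, -, -, rfl⟩; exact hx ⟨j, rfl⟩
          have h4 : ¬ LC x y := fun h => h.1 hy
          rw [c_of, c_of, if_neg h2, if_neg h4, if_neg h3, if_pos h1]; norm_num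
        · exfalso
          have := nb_eq x hx y hAdj
          exact hy (this ▸ ⟨jIdx x, rfl⟩)
  -- now the rank bound
  obtain ⟨K, hK⟩ := hn
  have hK' : n - 1 = 2 * K := by omega
  refine ⟨A, hskew, ?_⟩
  -- the spanning family
  set oddIdx : Fin K → Fin n := fun k => ⟨2 * (k : ℕ) + 1, by omega⟩ with hoddIdx
  set f : (Fin K ⊕ Fin K) → (V → ℝ) := Sum.elim
    (fun k => Pi.single (v (oddIdx k)) (1 : ℝ))
    (fun k => fun x => A x (v (oddIdx k))) with hf
  have ftrue : ∀ k : Fin K, f (Sum.inl k) = Pi.single (v (oddIdx k)) (1 : ℝ) := fun _ => rfl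
  have ffalse : ∀ k : Fin K, f (Sum.inr k) = fun x => A x (v (oddIdx k)) := fun _ => rfl
  have key : ∀ u : V, (Aᵀ u) ∈ Submodule.span ℝ (Set.range f) := by
    intro u
    have hAT : Aᵀ u = fun x => A x u := rfl
    by_cases hu : u ∈ Set.range v
    · obtain ⟨m, rfl⟩ := hu
      by_cases hm : Odd (m : ℕ)
      · -- odd spine column: a generator itself
        obtain ⟨k, hk⟩ := hm
        have hkK : k < K := by omega
        have hidx : oddIdx ⟨k, hkK⟩ = m := Fin.ext (show 2 * k + 1 = (m : ℕ) by omega)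
        have : Aᵀ (v m) = f (Sum.inr ⟨k, hkK⟩) := by
          rw [ffalse, hidx]
          rfl
        rw [this]
        exact Submodule.subset_span ⟨_, rfl⟩
      · -- even spine column
        rw [Nat.not_odd_iff_even] at hm
        -- compute the column
        have hcol : ∀ x : V, A x (v m) =
            (if h : 1 ≤ (m : ℕ) then (if x = v ⟨(m : ℕ) - 1, by omega⟩ then 1 else 0) else 0)
            - (if h : (m : ℕ) + 1 < n then (if x = v ⟨(m : ℕ) + 1, h⟩ then 1 else 0) else 0) := by
          intro x
          rw [hAapp]
          congr 1
          · -- c x (v m)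
            have hLC' : ¬ LC x (v m) := fun h => h.1 ⟨m, rfl⟩
            by_cases h1 : 1 ≤ (m : ℕ)
            · rw [dif_pos h1]
              by_cases h2 : x = v ⟨(m : ℕ) - 1, by omega⟩
              · have hSC' : SC x (v m) :=
                  ⟨⟨(m : ℕ) - 1, by omega⟩, m, by show (m:ℕ) = (m:ℕ) - 1 + 1; omega, h2, rfl⟩
                rw [c_of, if_pos hSC', if_neg hLC', if_pos h2]; norm_num
              · have hSC' : ¬ SC x (v m) := by
                  rintro ⟨i, j, hij, rfl, hj⟩
                  have : j = m := hinj hj.symm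
                  subst this
                  apply h2
                  congr 1
                  apply Fin.ext
                  simp
                  omega
                rw [c_of, if_neg hSC', if_neg hLC', if_neg h2]; norm_num
            · rw [dif_neg h1]
              have hSC' : ¬ SC x (v m) := by
                rintro ⟨i, j, hij, rfl, hj⟩
                have : j = m := hinj hj.symm
                subst this
                omega
              rw [c_of, if_neg hSC', if_neg hLC']; norm_num
          · -- c (v m) x
            have hLC' : ¬ LC (v m) x := by
              rintro ⟨hx, he⟩
              have hmj : m = jIdx x := hinj he
              have hodd := (jspec x hx).2
              rw [← hmj] at hodd
              exact (Nat.not_even_iff_odd.2 hodd) hm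
            by_cases h1 : (m : ℕ) + 1 < n
            · rw [dif_pos h1]
              by_cases h2 : x = v ⟨(m : ℕ) + 1, h1⟩
              · have hSC' : SC (v m) x :=
                  ⟨m, ⟨(m : ℕ) + 1, h1⟩, by show (m:ℕ) + 1 = (m:ℕ) + 1; rfl, rfl, h2⟩
                rw [c_of, if_pos hSC', if_neg hLC', if_pos h2]; norm_num
              · have hSC' : ¬ SC (v m) x := by
                  rintro ⟨i, j, hij, hi, rfl⟩
                  have him : i = m := hinj hi.symm
                  have him' : (i : ℕ) = (m : ℕ) := congrArg Fin.val him
                  apply h2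
                  apply congrArg
                  exact Fin.ext (show (j : ℕ) = (m : ℕ) + 1 by omega)
                rw [c_of, if_neg hSC', if_neg hLC', if_neg h2]; norm_num
            · rw [dif_neg h1]
              have hSC' : ¬ SC (v m) x := by
                rintro ⟨i, j, hij, hi, rfl⟩
                have : i = m := hinj hi.symm
                subst this
                omega
              rw [c_of, if_neg hSC', if_neg hLC']; norm_num
        -- now express as combination
        have hfun : Aᵀ (v m) =
            (if h : 1 ≤ (m : ℕ) then Pi.single (v ⟨(m : ℕ) - 1, by omega⟩) (1:ℝ) else 0)
            - (if h : (m : ℕ) + 1 < n then Pi.single (v ⟨(m : ℕ) + 1, h⟩) (1:ℝ) else 0) := by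
          funext x
          show A x (v m) = _
          rw [hcol x]
          congr 1
          · by_cases h1 : 1 ≤ (m : ℕ)
            · rw [dif_pos h1, dif_pos h1, Pi.single_apply]
            · rw [dif_neg h1, dif_neg h1]; rfl
          · by_cases h1 : (m : ℕ) + 1 < n
            · rw [dif_pos h1, dif_pos h1, Pi.single_apply]
            · rw [dif_neg h1, dif_neg h1]; rfl
        rw [hfun]
        apply Submodule.sub_mem
        · by_cases h1 : 1 ≤ (m : ℕ)
          · rw [dif_pos h1]
            have hmo : Odd ((m : ℕ) - 1) := by
              rcases hm with ⟨t, ht⟩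
              exact ⟨t - 1, by omega⟩
            obtain ⟨k, hk⟩ := hmo
            have hkK : k < K := by omega
            have hidx : oddIdx ⟨k, hkK⟩ = ⟨(m : ℕ) - 1, by omega⟩ :=
              Fin.ext (show 2 * k + 1 = (m : ℕ) - 1 by omega)
            have : Pi.single (v ⟨(m : ℕ) - 1, by omega⟩) (1:ℝ) = f (Sum.inl ⟨k, hkK⟩) := by
              rw [ftrue, hidx]
            rw [this]
            exact Submodule.subset_span ⟨_, rfl⟩
          · rw [dif_neg h1]; exact Submodule.zero_mem _
        · by_cases h1 : (m : ℕ) + 1 < n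
          · rw [dif_pos h1]
            have hmo : Odd ((m : ℕ) + 1) := by
              rcases hm with ⟨t, ht⟩
              exact ⟨t, by omega⟩
            obtain ⟨k, hk⟩ := hmo
            have hkK : k < K := by omega
            have hidx : oddIdx ⟨k, hkK⟩ = ⟨(m : ℕ) + 1, h1⟩ :=
              Fin.ext (show 2 * k + 1 = (m : ℕ) + 1 by omega)
            have : Pi.single (v ⟨(m : ℕ) + 1, h1⟩) (1:ℝ) = f (Sum.inl ⟨k, hkK⟩) := by
              rw [ftrue, hidx]
            rw [this]
            exact Submodule.subset_span ⟨_, rfl⟩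
          · rw [dif_neg h1]; exact Submodule.zero_mem _
    · -- off-spine column
      have hcol : ∀ x : V, A x u = if x = v (jIdx u) then 1 else 0 := by
        intro x
        rw [hAapp]
        have h2 : ¬ SC x u := by rintro ⟨i, j, -, -, rfl⟩; exact hu ⟨j, rfl⟩
        have h3 : ¬ SC u x := by rintro ⟨i, j, -, rfl, -⟩; exact hu ⟨i, rfl⟩
        have h4 : ¬ LC u x := by
          rintro ⟨hx, he⟩
          exact hu (he ▸ ⟨jIdx x, rfl⟩)
        by_cases h1 : x = v (jIdx u)
        · have hLC' : LC x u := ⟨hu, h1⟩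
          rw [c_of, c_of, if_neg h2, if_pos hLC', if_neg h3, if_neg h4, if_pos h1]; norm_num
        · have hLC' : ¬ LC x u := fun h => h1 h.2
          rw [c_of, c_of, if_neg h2, if_neg hLC', if_neg h3, if_neg h4, if_neg h1]; norm_num
      have hodd := (jspec u hu).2
      obtain ⟨k, hk⟩ := hodd
      have hkK : k < K := by
        have := (jIdx u).2
        omega
      have hidx : oddIdx ⟨k, hkK⟩ = jIdx u :=
        Fin.ext (show 2 * k + 1 = ((jIdx u) : ℕ) by omega)
      have : Aᵀ u = f (Sum.inl ⟨k, hkK⟩) := by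
        funext x
        show A x u = _
        rw [hcol x, ftrue, hidx, Pi.single_apply]
      rw [this]
      exact Submodule.subset_span ⟨_, rfl⟩
  -- conclude
  have h1 : Submodule.span ℝ (Set.range Aᵀ) ≤ Submodule.span ℝ (Set.range f) := by
    rw [Submodule.span_le]
    rintro x ⟨u, rfl⟩
    exact key u
  calc A.rank = Module.finrank ℝ (Submodule.span ℝ (Set.range Aᵀ)) :=
        Matrix.rank_eq_finrank_span_cols A
    _ ≤ Module.finrank ℝ (Submodule.span ℝ (Set.range f)) := Submodule.finrank_mono h1
    _ ≤ Fintype.card (Fin K ⊕ Fin K) := finrank_range_le_card f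
    _ = n - 1 := by simp [hK']; omega



lemma tree_walk_length (hT : T.IsTree) {a b : V} (p : T.Walk a b) (hp : p.IsPath) :
    p.length = T.dist a b := by
  have h1 : T.dist a b ≤ p.length := SimpleGraph.dist_le p
  obtain ⟨q, hql⟩ := (hT.isConnected a b).exists_walk_length_eq_dist
  have hq2 : q.bypass.length ≤ q.length := q.length_bypass_le
  have hpe : p = q.bypass := (hT.existsUnique_path a b).unique hp q.bypass_isPath
  rw [hpe] at h1 ⊢
  omega

lemma spine_walk {n : ℕ} (v : Fin n → V) (hinj : Function.Injective v)
    (hadj : ∀ i j, T.Adj (v i) (v j) ↔ (pathGraph n).Adj i j) :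
    ∀ (g i : ℕ) (h : i + g < n), ∃ p : T.Walk (v ⟨i, by omega⟩) (v ⟨i + g, h⟩),
      p.IsPath ∧ p.length = g ∧
      ∀ x ∈ p.support, ∃ k : ℕ, i ≤ k ∧ k ≤ i + g ∧ ∃ hk : k < n, x = v ⟨k, hk⟩ := by
  intro g
  induction g with
  | zero =>
    intro i h
    refine ⟨SimpleGraph.Walk.nil, by simp, by simp, ?_⟩
    intro x hx
    rw [SimpleGraph.Walk.support_nil, List.mem_singleton] at hx
    exact ⟨i, le_refl i, by omega, by omega, hx⟩
  | succ g ih =>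
    intro i h
    have h1 : i + 1 + g < n := by omega
    have he : (⟨i + 1 + g, h1⟩ : Fin n) = ⟨i + (g + 1), h⟩ :=
      Fin.ext (show i + 1 + g = i + (g + 1) by omega)
    have H := ih (i + 1) h1
    rw [he] at H
    obtain ⟨q, hqp, hql, hqs⟩ := H
    have hadj1 : T.Adj (v ⟨i, by omega⟩) (v ⟨i + 1, by omega⟩) := by
      rw [hadj, pathGraph_adj]
      left; rfl
    refine ⟨SimpleGraph.Walk.cons hadj1 q, ?_, by simp [hql], ?_⟩
    · rw [SimpleGraph.Walk.cons_isPath_iff]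
      refine ⟨hqp, fun hmem => ?_⟩
      obtain ⟨k, hk1, hk2, hk3, hk4⟩ := hqs _ hmem
      have h5 : (⟨i, by omega⟩ : Fin n) = ⟨k, hk3⟩ := hinj hk4
      have h6 := congrArg Fin.val h5
      simp only [Fin.val_mk] at h6
      omega
    · intro x hx
      rw [SimpleGraph.Walk.support_cons, List.mem_cons] at hx
      rcases hx with rfl | hx
      · exact ⟨i, le_refl i, by omega, by omega, rfl⟩
      · obtain ⟨k, hk1, hk2, hk3, hk4⟩ := hqs _ hx
        exact ⟨k, by omega, by omega, hk3, hk4⟩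

lemma no_two_spine_nbrs (hT : T.IsTree) {n : ℕ} {v : Fin n → V}
    (hinj : Function.Injective v)
    (hadj : ∀ i j, T.Adj (v i) (v j) ↔ (pathGraph n).Adj i j)
    {w : V} (hw : w ∉ Set.range v) {i j : Fin n} (hij : (i : ℕ) < (j : ℕ))
    (h1 : T.Adj w (v i)) (h2 : T.Adj w (v j)) : False := by
  have hne : v i ≠ v j := fun h => by
    have := congrArg Fin.val (hinj h); omega
  let p1 : T.Walk (v i) (v j) :=
    SimpleGraph.Walk.cons h1.symm (SimpleGraph.Walk.cons h2 SimpleGraph.Walk.nil)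
  have hp1 : p1.IsPath := by
    rw [SimpleGraph.Walk.cons_isPath_iff]
    refine ⟨?_, ?_⟩
    · rw [SimpleGraph.Walk.cons_isPath_iff]
      refine ⟨SimpleGraph.Walk.IsPath.nil, ?_⟩
      rw [SimpleGraph.Walk.support_nil, List.mem_singleton]
      intro hh; exact hw ⟨j, hh.symm⟩
    · rw [SimpleGraph.Walk.support_cons, SimpleGraph.Walk.support_nil, List.mem_cons,
        List.mem_singleton]
      rintro (hh | hh)
      · exact hw ⟨i, hh⟩
      · exact hne hh
  -- the spine path
  have hlt : (i : ℕ) + ((j : ℕ) - (i : ℕ)) < n := by have := j.2; omega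
  have H := spine_walk v hinj hadj ((j : ℕ) - (i : ℕ)) (i : ℕ) hlt
  have he1 : (⟨(i : ℕ), by omega⟩ : Fin n) = i := Fin.ext rfl
  have he2 : (⟨(i : ℕ) + ((j : ℕ) - (i : ℕ)), hlt⟩ : Fin n) = j :=
    Fin.ext (show (i : ℕ) + ((j : ℕ) - (i : ℕ)) = (j : ℕ) by omega)
  rw [he1, he2] at H
  obtain ⟨p2, hp2, -, hp2s⟩ := H
  have heq : p1 = p2 := (hT.existsUnique_path (v i) (v j)).unique hp1 hp2
  have hwmem : w ∈ p1.support := by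
    show w ∈ (SimpleGraph.Walk.cons _ _).support
    rw [SimpleGraph.Walk.support_cons, SimpleGraph.Walk.support_cons]
    simp
  rw [heq] at hwmem
  obtain ⟨k, -, -, hk3, hk4⟩ := hp2s _ hwmem
  exact hw ⟨⟨k, hk3⟩, hk4.symm⟩

lemma endpoint_attach (hT : T.IsTree) {n : ℕ} (hn2 : 2 ≤ n) {v : Fin n → V}
    (hinj : Function.Injective v)
    (hadj : ∀ i j, T.Adj (v i) (v j) ↔ (pathGraph n).Adj i j)
    (hdiam : n = T.diam + 1) {w : V} (hw : w ∉ Set.range v)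
    (h0 : T.Adj w (v ⟨0, by omega⟩) ∨ T.Adj w (v ⟨n - 1, by omega⟩)) : False := by
  have hlt : 0 + (n - 1) < n := by omega
  have H := spine_walk v hinj hadj (n - 1) 0 hlt
  have he2 : (⟨0 + (n - 1), hlt⟩ : Fin n) = ⟨n - 1, by omega⟩ :=
    Fin.ext (show 0 + (n - 1) = n - 1 by omega)
  rw [he2] at H
  obtain ⟨p, hp, hpl, hps⟩ := H
  have hdne : T.diam ≠ 0 := by omega
  have hediam := SimpleGraph.ediam_ne_top_of_diam_ne_zero hdne
  have hwp : w ∉ p.support := by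
    intro hmem
    obtain ⟨k, -, -, hk3, hk4⟩ := hps _ hmem
    exact hw ⟨⟨k, hk3⟩, hk4.symm⟩
  rcases h0 with h0 | h0
  · have hqp : (SimpleGraph.Walk.cons h0 p).IsPath := hp.cons hwp
    have hql : (SimpleGraph.Walk.cons h0 p).length = n := by
      rw [SimpleGraph.Walk.length_cons, hpl]; omega
    have h1 := tree_walk_length hT _ hqp
    have hd : T.dist w (v ⟨n - 1, by omega⟩) ≤ T.diam := SimpleGraph.dist_le_diam hediam
    omega
  · have hwp' : w ∉ p.reverse.support := by
      rw [SimpleGraph.Walk.support_reverse, List.mem_reverse]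
      exact hwp
    have hqp : (SimpleGraph.Walk.cons h0 p.reverse).IsPath := hp.reverse.cons hwp'
    have hql : (SimpleGraph.Walk.cons h0 p.reverse).length = n := by
      rw [SimpleGraph.Walk.length_cons, SimpleGraph.Walk.length_reverse, hpl]; omega
    have h1 := tree_walk_length hT _ hqp
    have hd : T.dist w (v ⟨0, by omega⟩) ≤ T.diam := SimpleGraph.dist_le_diam hediam
    omega

lemma adj_dist (hT : T.IsTree) (ρ : V) {x y : V} (h : T.Adj x y) :
    T.dist x ρ = T.dist y ρ + 1 ∨ T.dist y ρ = T.dist x ρ + 1 := by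
  obtain ⟨q, hql⟩ := (hT.isConnected y ρ).exists_walk_length_eq_dist
  have hqp : q.IsPath := q.isPath_of_length_eq_dist hql
  by_cases hx : x ∈ q.support
  · right
    obtain ⟨q1, q2, rfl⟩ := SimpleGraph.Walk.mem_support_iff_exists_append.mp hx
    have hlen := SimpleGraph.Walk.length_append q1 q2
    have hd2 : T.dist x ρ ≤ q2.length := SimpleGraph.dist_le q2
    have hq1 : q1.length ≠ 0 := fun h0 => h.ne' (SimpleGraph.Walk.eq_of_length_eq_zero h0)
    have htri : T.dist y ρ ≤ T.dist y x + T.dist x ρ := hT.isConnected.dist_triangle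
    have hd1 : T.dist y x = 1 := SimpleGraph.dist_eq_one_iff_adj.2 h.symm
    omega
  · left
    have hcons : (SimpleGraph.Walk.cons h q).IsPath := hqp.cons hx
    have h1 := tree_walk_length hT _ hcons
    rw [SimpleGraph.Walk.length_cons, hql] at h1
    omega

lemma lower_unique (hT : T.IsTree) (ρ : V) {z x y : V} (hx : T.Adj z x) (hy : T.Adj z y)
    (hdx : T.dist x ρ + 1 = T.dist z ρ) (hdy : T.dist y ρ + 1 = T.dist z ρ) : x = y := by
  obtain ⟨px, hpxl⟩ := (hT.isConnected x ρ).exists_walk_length_eq_dist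
  have hpxp := px.isPath_of_length_eq_dist hpxl
  obtain ⟨py, hpyl⟩ := (hT.isConnected y ρ).exists_walk_length_eq_dist
  have hpyp := py.isPath_of_length_eq_dist hpyl
  have hzx : z ∉ px.support := by
    intro hmem
    obtain ⟨q1, q2, rfl⟩ := SimpleGraph.Walk.mem_support_iff_exists_append.mp hmem
    have hlen := SimpleGraph.Walk.length_append q1 q2
    have hd := SimpleGraph.dist_le q2
    omega
  have hzy : z ∉ py.support := by
    intro hmem
    obtain ⟨q1, q2, rfl⟩ := SimpleGraph.Walk.mem_support_iff_exists_append.mp hmem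
    have hlen := SimpleGraph.Walk.length_append q1 q2
    have hd := SimpleGraph.dist_le q2
    omega
  have h1 : (SimpleGraph.Walk.cons hx px).IsPath := hpxp.cons hzx
  have h2 : (SimpleGraph.Walk.cons hy py).IsPath := hpyp.cons hzy
  have heq := (hT.existsUnique_path z ρ).unique h1 h2
  have := congrArg (fun p => SimpleGraph.Walk.getVert p 1) heq
  simpa [SimpleGraph.Walk.getVert_cons_succ, SimpleGraph.Walk.getVert_zero] using this

lemma exists_nbr (hT : T.IsTree) {w ρ : V} (hne : w ≠ ρ) : ∃ x, T.Adj w x := by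
  obtain ⟨q, -⟩ := (hT.isConnected w ρ).exists_walk_length_eq_dist
  cases q with
  | nil => exact absurd rfl hne
  | cons h p => exact ⟨_, h⟩

lemma rank_ge_of_matching (hT : T.IsTree) (ρ : V)
    {A : Matrix V V ℝ} (hA : IsSkewRep T A) {k : ℕ} (e : Fin k → V × V)
    (he : ∀ i, T.Adj (e i).1 (e i).2)
    (hinj : Function.Injective (fun p : Fin k × Bool => if p.2 then (e p.1).1 else (e p.1).2)) :
    2 * k ≤ A.rank := by
  classical
  have hpair : ∀ (i j : Fin k) (a b : Bool),
      (if a then (e i).1 else (e i).2) = (if b then (e j).1 else (e j).2) → i = j ∧ a = b := by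
    intro i j a b h
    have h2 := hinj (a₁ := (i, a)) (a₂ := (j, b)) h
    exact ⟨congrArg Prod.fst h2, congrArg Prod.snd h2⟩
  have h11 : ∀ i j : Fin k, (e i).1 = (e j).1 → i = j := by
    intro i j h; exact (hpair i j true true (by simpa using h)).1
  have h22 : ∀ i j : Fin k, (e i).2 = (e j).2 → i = j := by
    intro i j h; exact (hpair i j false false (by simpa using h)).1
  have h12 : ∀ i j : Fin k, (e i).1 ≠ (e j).2 := by
    intro i j h
    exact absurd (hpair i j true false (by simpa using h)).2 (by simp)
  set S : Fin k → Prop := fun i => T.dist (e i).1 ρ < T.dist (e i).2 ρ with hS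
  set top : Fin k → V := fun i => if S i then (e i).1 else (e i).2 with htop
  set bot : Fin k → V := fun i => if S i then (e i).2 else (e i).1 with hbot
  set d : Fin k → ℕ := fun i => T.dist (top i) ρ with hd
  have hdd : ∀ i, T.dist (top i) ρ = d i := fun _ => rfl
  have hadj_tb : ∀ i, T.Adj (bot i) (top i) := by
    intro i
    by_cases h : S i
    · simp only [htop, hbot, if_pos h]; exact (he i).symm
    · simp only [htop, hbot, if_neg h]; exact he i
  have hdepth : ∀ i, T.dist (bot i) ρ = d i + 1 := by
    intro i
    have h2 := adj_dist hT ρ (he i)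
    by_cases h : S i
    · have h3 : T.dist (e i).1 ρ < T.dist (e i).2 ρ := h
      simp only [hd, htop, hbot, if_pos h]
      omega
    · have h3 : ¬ (T.dist (e i).1 ρ < T.dist (e i).2 ρ) := h
      simp only [hd, htop, hbot, if_neg h]
      omega
  have htop_inj : ∀ i j, top i = top j → i = j := by
    intro i j h
    by_cases hi : S i <;> by_cases hj : S j <;>
      simp only [htop, if_pos, if_neg, hi, hj, if_true, if_false] at h
    · exact h11 _ _ h
    · exact absurd h (h12 _ _)
    · exact absurd h.symm (h12 _ _)
    · exact h22 _ _ h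
  have htb_ne : ∀ i j, bot i ≠ top j := by
    intro i j h
    by_cases hi : S i <;> by_cases hj : S j <;>
      simp only [htop, hbot, if_pos, if_neg, hi, hj, if_true, if_false] at h
    · exact absurd h.symm (h12 _ _)
    · obtain rfl := h22 _ _ h
      exact hj hi
    · obtain rfl := h11 _ _ h
      exact hi hj
    · exact absurd h (h12 _ _)
  set K : ℕ := Finset.univ.sup d with hK
  have hdK : ∀ i, d i ≤ K := fun i => Finset.le_sup (Finset.mem_univ i)
  set r : Fin k × Bool → V := fun p => cond p.2 (bot p.1) (top p.1) with hr
  set c : Fin k × Bool → V := fun p => cond p.2 (top p.1) (bot p.1) with hc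
  set κ : Fin k × Bool → ℕ := fun p => cond p.2 (K - d p.1) (K + 1 + d p.1) with hκ
  have hdiag : ∀ p, T.Adj (r p) (c p) := by
    rintro ⟨i, si⟩
    cases si
    · exact (hadj_tb i).symm
    · exact hadj_tb i
  have hstrict : ∀ p q, p ≠ q → T.Adj (r p) (c q) → r p ≠ c q → κ q < κ p := by
    rintro ⟨i, si⟩ ⟨j, sj⟩ hne hAdj hneq
    have hcd := adj_dist hT ρ hAdj
    cases si <;> cases sj
    · -- (false, false) : row top i, col bot j
      show K + 1 + d j < K + 1 + d i
      rw [show r (i, false) = top i from rfl, show c (j, false) = bot j from rfl] at hAdj hcd hneq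
      rw [hdd i, hdepth j] at hcd
      rcases hcd with hcd | hcd
      · omega
      · -- d j = d i : top i = top j via lower_unique at bot j
        exfalso
        have h4 : T.dist (top i) ρ + 1 = T.dist (bot j) ρ := by
          rw [hdd i, hdepth j]; omega
        have h5 : T.dist (top j) ρ + 1 = T.dist (bot j) ρ := by
          rw [hdd j, hdepth j]
        have h6 : top i = top j :=
          lower_unique hT ρ hAdj.symm (hadj_tb j) h4 h5
        obtain rfl := htop_inj _ _ h6
        exact hne rfl
    · -- (false, true) : κ q = K - d j < K + 1 + d i
      show K - d j < K + 1 + d i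
      omega
    · -- (true, false) : row bot i, col bot j: impossible
      exfalso
      rw [show r (i, true) = bot i from rfl, show c (j, false) = bot j from rfl] at hAdj hneq
      have hcd := adj_dist hT ρ hAdj
      rw [hdepth i, hdepth j] at hcd
      rcases hcd with hcd | hcd
      · -- d i = d j + 1 : bot j = top i
        have h4 : T.dist (bot j) ρ + 1 = T.dist (bot i) ρ := by
          rw [hdepth i, hdepth j]; omega
        have h5 : T.dist (top i) ρ + 1 = T.dist (bot i) ρ := by
          rw [hdd i, hdepth i]
        have h6 : bot j = top i := lower_unique hT ρ hAdj (hadj_tb i) h4 h5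
        exact htb_ne j i h6
      · -- d j = d i + 1 : bot i = top j
        have h4 : T.dist (bot i) ρ + 1 = T.dist (bot j) ρ := by
          rw [hdepth i, hdepth j]; omega
        have h5 : T.dist (top j) ρ + 1 = T.dist (bot j) ρ := by
          rw [hdd j, hdepth j]
        have h6 : bot i = top j := lower_unique hT ρ hAdj.symm (hadj_tb j) h4 h5
        exact htb_ne i j h6
    · -- (true, true) : row bot i, col top j
      show K - d j < K - d i
      rw [show r (i, true) = bot i from rfl, show c (j, true) = top j from rfl] at hAdj hneq
      have hcd := adj_dist hT ρ hAdj
      rw [hdepth i, hdd j] at hcd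
      rcases hcd with hcd | hcd
      · -- d i = d j : top j = top i
        exfalso
        have h4 : T.dist (top j) ρ + 1 = T.dist (bot i) ρ := by
          rw [hdd j, hdepth i]; omega
        have h5 : T.dist (top i) ρ + 1 = T.dist (bot i) ρ := by
          rw [hdd i, hdepth i]
        have h6 : top j = top i := lower_unique hT ρ hAdj (hadj_tb i) h4 h5
        obtain rfl := htop_inj _ _ h6
        exact hne rfl
      · have := hdK j
        omega
  have := rank_ge_of_system hA r c κ hdiag hstrict
  have hcard : Fintype.card (Fin k × Bool) = 2 * k := by
    simp [Fintype.card_prod]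
    omega
  omega

/-- An edge between two off-spine vertices forces rank ≥ 2(k+1) = n+1. -/
lemma case1_rank (hT : T.IsTree) {n k : ℕ} (hnk : n = 2 * k + 1) {v : Fin n → V}
    (hvinj : Function.Injective v)
    (hvadj : ∀ i j, T.Adj (v i) (v j) ↔ (pathGraph n).Adj i j)
    {u w : V} (hu : u ∉ Set.range v) (hw : w ∉ Set.range v) (hadjuw : T.Adj u w)
    {B : Matrix V V ℝ} (hB : IsSkewRep T B) : 2 * (k + 1) ≤ B.rank := by
  classical
  have huw : u ≠ w := hadjuw.ne
  set emb : ℕ → V := fun x => if h : x < n then v ⟨x, h⟩ else if x = n then u else w with hemb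
  have emb_inj : ∀ x y, x ≤ n + 1 → y ≤ n + 1 → emb x = emb y → x = y := by
    intro x y hx hy hxy
    simp only [hemb] at hxy
    by_cases h1 : x < n <;> by_cases h2 : y < n
    · rw [dif_pos h1, dif_pos h2] at hxy
      have := congrArg Fin.val (hvinj hxy)
      simpa using this
    · rw [dif_pos h1, dif_neg h2] at hxy
      by_cases h3 : y = n
      · rw [if_pos h3] at hxy; exact absurd ⟨_, hxy⟩ hu
      · rw [if_neg h3] at hxy; exact absurd ⟨_, hxy⟩ hw
    · rw [dif_neg h1, dif_pos h2] at hxy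
      by_cases h3 : x = n
      · rw [if_pos h3] at hxy; exact absurd ⟨_, hxy.symm⟩ hu
      · rw [if_neg h3] at hxy; exact absurd ⟨_, hxy.symm⟩ hw
    · rw [dif_neg h1, dif_neg h2] at hxy
      by_cases h3 : x = n <;> by_cases h4 : y = n
      · omega
      · rw [if_pos h3, if_neg h4] at hxy; exact absurd hxy huw
      · rw [if_neg h3, if_pos h4] at hxy; exact absurd hxy.symm huw
      · omega
  set ψ1 : Fin (k + 1) → ℕ := fun t => if (t : ℕ) < k then 2 * t else n with hψ1
  set ψ2 : Fin (k + 1) → ℕ := fun t => if (t : ℕ) < k then 2 * t + 1 else n + 1 with hψ2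
  have hb1 : ∀ t, ψ1 t ≤ n + 1 := by
    intro t; simp only [hψ1]; split <;> omega
  have hb2 : ∀ t, ψ2 t ≤ n + 1 := by
    intro t; simp only [hψ2]; split <;> omega
  set e : Fin (k + 1) → V × V := fun t => (emb (ψ1 t), emb (ψ2 t)) with he'
  have he : ∀ t, T.Adj (e t).1 (e t).2 := by
    intro t
    show T.Adj (emb (ψ1 t)) (emb (ψ2 t))
    by_cases ht : (t : ℕ) < k
    · have e1 : ψ1 t = 2 * t := by simp only [hψ1]; rw [if_pos ht]
      have e2 : ψ2 t = 2 * t + 1 := by simp only [hψ2]; rw [if_pos ht]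
      rw [e1, e2]
      have hlt1 : 2 * (t : ℕ) < n := by omega
      have hlt2 : 2 * (t : ℕ) + 1 < n := by omega
      simp only [hemb]
      rw [dif_pos hlt1, dif_pos hlt2, hvadj, pathGraph_adj]
      left; rfl
    · have e1 : ψ1 t = n := by simp only [hψ1]; rw [if_neg ht]
      have e2 : ψ2 t = n + 1 := by simp only [hψ2]; rw [if_neg ht]
      have g1 : emb n = u := by
        simp only [hemb]
        rw [dif_neg (by omega : ¬ n < n)]
        simp
      have g2 : emb (n + 1) = w := by
        simp only [hemb]
        rw [dif_neg (by omega : ¬ n + 1 < n), if_neg (by omega : ¬ n + 1 = n)]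
      rw [e1, e2, g1, g2]
      exact hadjuw
  have hinj : Function.Injective
      (fun p : Fin (k + 1) × Bool => if p.2 then (e p.1).1 else (e p.1).2) := by
    rintro ⟨s, a⟩ ⟨t, b⟩ hpq
    have hxa : (if a then ψ1 s else ψ2 s) ≤ n + 1 := by
      cases a
      · exact hb2 s
      · exact hb1 s
    have hxb : (if b then ψ1 t else ψ2 t) ≤ n + 1 := by
      cases b
      · exact hb2 t
      · exact hb1 t
    have harith : (cond a (ψ1 s) (ψ2 s)) = (cond b (ψ1 t) (ψ2 t)) := by
      apply emb_inj _ _ ?_ ?_ ?_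
      · cases a
        · exact hb2 s
        · exact hb1 s
      · cases b
        · exact hb2 t
        · exact hb1 t
      · cases a <;> cases b <;> simpa [he'] using hpq
    have hs1 := s.2
    have ht1 := t.2
    have hv1 : ∀ z : Fin (k+1), (ψ1 z = 2 * z ∧ (z:ℕ) < k) ∨ (ψ1 z = n ∧ ¬ (z:ℕ) < k) := by
      intro z
      by_cases hz : (z:ℕ) < k
      · exact Or.inl ⟨by simp only [hψ1]; rw [if_pos hz], hz⟩
      · exact Or.inr ⟨by simp only [hψ1]; rw [if_neg hz], hz⟩
    have hv2 : ∀ z : Fin (k+1),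
        (ψ2 z = 2 * z + 1 ∧ (z:ℕ) < k) ∨ (ψ2 z = n + 1 ∧ ¬ (z:ℕ) < k) := by
      intro z
      by_cases hz : (z:ℕ) < k
      · exact Or.inl ⟨by simp only [hψ2]; rw [if_pos hz], hz⟩
      · exact Or.inr ⟨by simp only [hψ2]; rw [if_neg hz], hz⟩
    cases a <;> cases b
    · have h2' : ψ2 s = ψ2 t := harith
      rcases hv2 s with ⟨e1, c1⟩ | ⟨e1, c1⟩ <;> rcases hv2 t with ⟨e2, c2⟩ | ⟨e2, c2⟩ <;>
        rw [e1, e2] at h2' <;> simp only [Prod.mk.injEq] <;>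
        first
          | exact Fin.ext (by omega)
          | exact ⟨Fin.ext (by omega), trivial⟩
          | (exfalso; omega)
    · have h2' : ψ2 s = ψ1 t := harith
      rcases hv2 s with ⟨e1, c1⟩ | ⟨e1, c1⟩ <;> rcases hv1 t with ⟨e2, c2⟩ | ⟨e2, c2⟩ <;>
        rw [e1, e2] at h2' <;> (exfalso; omega)
    · have h2' : ψ1 s = ψ2 t := harith
      rcases hv1 s with ⟨e1, c1⟩ | ⟨e1, c1⟩ <;> rcases hv2 t with ⟨e2, c2⟩ | ⟨e2, c2⟩ <;>
        rw [e1, e2] at h2' <;> (exfalso; omega)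
    · have h2' : ψ1 s = ψ1 t := harith
      rcases hv1 s with ⟨e1, c1⟩ | ⟨e1, c1⟩ <;> rcases hv1 t with ⟨e2, c2⟩ | ⟨e2, c2⟩ <;>
        rw [e1, e2] at h2' <;> simp only [Prod.mk.injEq] <;>
        first
          | exact Fin.ext (by omega)
          | exact ⟨Fin.ext (by omega), trivial⟩
          | (exfalso; omega)
  have := rank_ge_of_matching hT (v ⟨0, by omega⟩) hB e he hinj
  omega

/-- A leg attached at an even (0-based) interior spine vertex forces rank ≥ 2(k+1) = n+1. -/
lemma case2_rank (hT : T.IsTree) {n k : ℕ} (hnk : n = 2 * k + 1) {v : Fin n → V}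
    (hvinj : Function.Injective v)
    (hvadj : ∀ i j, T.Adj (v i) (v j) ↔ (pathGraph n).Adj i j)
    {w : V} (hw : w ∉ Set.range v) {h : ℕ} (hh1 : 1 ≤ h) (hh2 : h + h ≤ n - 3)
    (hadjw : T.Adj (v ⟨h + h, by omega⟩) w)
    {B : Matrix V V ℝ} (hB : IsSkewRep T B) : 2 * (k + 1) ≤ B.rank := by
  classical
  set j : ℕ := h + h with hj
  set emb : ℕ → V := fun x => if hx : x < n then v ⟨x, hx⟩ else w with hemb
  have emb_inj : ∀ x y, x ≤ n → y ≤ n → emb x = emb y → x = y := by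
    intro x y hx hy hxy
    simp only [hemb] at hxy
    by_cases h1 : x < n <;> by_cases h2 : y < n
    · rw [dif_pos h1, dif_pos h2] at hxy
      have := congrArg Fin.val (hvinj hxy)
      simpa using this
    · rw [dif_pos h1, dif_neg h2] at hxy
      exact absurd ⟨_, hxy⟩ hw
    · rw [dif_neg h1, dif_pos h2] at hxy
      exact absurd ⟨_, hxy.symm⟩ hw
    · omega
  set ψ1 : Fin (k + 1) → ℕ := fun t =>
    if (t : ℕ) < h then 2 * t else if (t : ℕ) = h then j else 2 * t - 1 with hψ1
  set ψ2 : Fin (k + 1) → ℕ := fun t =>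
    if (t : ℕ) < h then 2 * t + 1 else if (t : ℕ) = h then n else 2 * t with hψ2
  have hb1 : ∀ t, ψ1 t ≤ n := by
    intro t; have := t.2; simp only [hψ1]; split
    · omega
    · split <;> omega
  have hb2 : ∀ t, ψ2 t ≤ n := by
    intro t; have := t.2; simp only [hψ2]; split
    · omega
    · split <;> omega
  set e : Fin (k + 1) → V × V := fun t => (emb (ψ1 t), emb (ψ2 t)) with he'
  have he : ∀ t, T.Adj (e t).1 (e t).2 := by
    intro t
    show T.Adj (emb (ψ1 t)) (emb (ψ2 t))
    have ht2 := t.2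
    by_cases ht : (t : ℕ) < h
    · have e1 : ψ1 t = 2 * t := by simp only [hψ1]; rw [if_pos ht]
      have e2 : ψ2 t = 2 * t + 1 := by simp only [hψ2]; rw [if_pos ht]
      rw [e1, e2]
      simp only [hemb]
      rw [dif_pos (by omega : 2 * (t:ℕ) < n), dif_pos (by omega : 2 * (t:ℕ) + 1 < n),
        hvadj, pathGraph_adj]
      left; rfl
    by_cases hte : (t : ℕ) = h
    · have e1 : ψ1 t = j := by simp only [hψ1]; rw [if_neg ht, if_pos hte]
      have e2 : ψ2 t = n := by simp only [hψ2]; rw [if_neg ht, if_pos hte]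
      rw [e1, e2]
      simp only [hemb]
      rw [dif_pos (by omega : j < n), dif_neg (by omega : ¬ n < n)]
      exact hadjw
    · have e1 : ψ1 t = 2 * t - 1 := by simp only [hψ1]; rw [if_neg ht, if_neg hte]
      have e2 : ψ2 t = 2 * t := by simp only [hψ2]; rw [if_neg ht, if_neg hte]
      rw [e1, e2]
      simp only [hemb]
      rw [dif_pos (by omega : 2 * (t:ℕ) - 1 < n), dif_pos (by omega : 2 * (t:ℕ) < n),
        hvadj, pathGraph_adj]
      left
      show 2 * (t:ℕ) - 1 + 1 = 2 * (t:ℕ)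
      omega
  have hinj : Function.Injective
      (fun p : Fin (k + 1) × Bool => if p.2 then (e p.1).1 else (e p.1).2) := by
    rintro ⟨s, a⟩ ⟨t, b⟩ hpq
    have hxa : (if a then ψ1 s else ψ2 s) ≤ n := by
      cases a
      · exact hb2 s
      · exact hb1 s
    have hxb : (if b then ψ1 t else ψ2 t) ≤ n := by
      cases b
      · exact hb2 t
      · exact hb1 t
    have harith : (cond a (ψ1 s) (ψ2 s)) = (cond b (ψ1 t) (ψ2 t)) := by
      apply emb_inj _ _ ?_ ?_ ?_
      · cases a
        · exact hb2 s
        · exact hb1 s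
      · cases b
        · exact hb2 t
        · exact hb1 t
      · cases a <;> cases b <;> simpa [he'] using hpq
    have hs1 := s.2
    have ht1 := t.2
    have hv1 : ∀ z : Fin (k+1), (ψ1 z = 2 * z ∧ (z:ℕ) < h) ∨ (ψ1 z = j ∧ (z:ℕ) = h) ∨
        (ψ1 z = 2 * z - 1 ∧ ¬ (z:ℕ) < h ∧ (z:ℕ) ≠ h) := by
      intro z
      by_cases hz : (z:ℕ) < h
      · exact Or.inl ⟨by simp only [hψ1]; rw [if_pos hz], hz⟩
      by_cases hz' : (z:ℕ) = h
      · exact Or.inr (Or.inl ⟨by simp only [hψ1]; rw [if_neg hz, if_pos hz'], hz'⟩)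
      · exact Or.inr (Or.inr ⟨by simp only [hψ1]; rw [if_neg hz, if_neg hz'], hz, hz'⟩)
    have hv2 : ∀ z : Fin (k+1), (ψ2 z = 2 * z + 1 ∧ (z:ℕ) < h) ∨ (ψ2 z = n ∧ (z:ℕ) = h) ∨
        (ψ2 z = 2 * z ∧ ¬ (z:ℕ) < h ∧ (z:ℕ) ≠ h) := by
      intro z
      by_cases hz : (z:ℕ) < h
      · exact Or.inl ⟨by simp only [hψ2]; rw [if_pos hz], hz⟩
      by_cases hz' : (z:ℕ) = h
      · exact Or.inr (Or.inl ⟨by simp only [hψ2]; rw [if_neg hz, if_pos hz'], hz'⟩)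
      · exact Or.inr (Or.inr ⟨by simp only [hψ2]; rw [if_neg hz, if_neg hz'], hz, hz'⟩)
    cases a <;> cases b
    · have h2' : ψ2 s = ψ2 t := harith
      rcases hv2 s with ⟨e1, c1⟩ | ⟨e1, c1⟩ | ⟨e1, c1, c1'⟩ <;>
        rcases hv2 t with ⟨e2, c2⟩ | ⟨e2, c2⟩ | ⟨e2, c2, c2'⟩ <;>
        rw [e1, e2] at h2' <;> simp only [Prod.mk.injEq] <;>
        first
          | exact Fin.ext (by omega)
          | exact ⟨Fin.ext (by omega), trivial⟩
          | (exfalso; omega)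
    · have h2' : ψ2 s = ψ1 t := harith
      rcases hv2 s with ⟨e1, c1⟩ | ⟨e1, c1⟩ | ⟨e1, c1, c1'⟩ <;>
        rcases hv1 t with ⟨e2, c2⟩ | ⟨e2, c2⟩ | ⟨e2, c2, c2'⟩ <;>
        rw [e1, e2] at h2' <;> (exfalso; omega)
    · have h2' : ψ1 s = ψ2 t := harith
      rcases hv1 s with ⟨e1, c1⟩ | ⟨e1, c1⟩ | ⟨e1, c1, c1'⟩ <;>
        rcases hv2 t with ⟨e2, c2⟩ | ⟨e2, c2⟩ | ⟨e2, c2, c2'⟩ <;>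
        rw [e1, e2] at h2' <;> (exfalso; omega)
    · have h2' : ψ1 s = ψ1 t := harith
      rcases hv1 s with ⟨e1, c1⟩ | ⟨e1, c1⟩ | ⟨e1, c1, c1'⟩ <;>
        rcases hv1 t with ⟨e2, c2⟩ | ⟨e2, c2⟩ | ⟨e2, c2, c2'⟩ <;>
        rw [e1, e2] at h2' <;> simp only [Prod.mk.injEq] <;>
        first
          | exact Fin.ext (by omega)
          | exact ⟨Fin.ext (by omega), trivial⟩
          | (exfalso; omega)
  have := rank_ge_of_matching hT (v ⟨0, by omega⟩) hB e he hinj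
  omega

lemma rank_ge_spine {A : Matrix V V ℝ} (hA : IsSkewRep T A) {n : ℕ} (v : Fin n → V)
    (hinj : Function.Injective v)
    (hadj : ∀ i j, T.Adj (v i) (v j) ↔ (pathGraph n).Adj i j) :
    n - 1 ≤ A.rank := by
  rcases Nat.eq_zero_or_pos n with rfl | npos
  · simp
  have hd : ∀ i : Fin (n - 1), T.Adj (v ⟨(i : ℕ), by omega⟩) (v ⟨(i : ℕ) + 1, by omega⟩) := by
    intro i
    rw [hadj, pathGraph_adj]
    left; rfl
  have hs : ∀ i j : Fin (n - 1), i ≠ j →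
      T.Adj (v ⟨(i : ℕ), by omega⟩) (v ⟨(j : ℕ) + 1, by omega⟩) →
      v ⟨(i : ℕ), by omega⟩ ≠ v ⟨(j : ℕ) + 1, by omega⟩ → (j : ℕ) < (i : ℕ) := by
    intro i j hne hAdj hneq
    rw [hadj, pathGraph_adj] at hAdj
    have hAdj' : ((i : ℕ) + 1 = (j : ℕ) + 1) ∨ ((j : ℕ) + 1 + 1 = (i : ℕ)) := hAdj
    have hij : (i : ℕ) ≠ (j : ℕ) := fun h => hne (Fin.ext h)
    omega
  have H := rank_ge_of_system hA (fun i : Fin (n - 1) => v ⟨(i : ℕ), by omega⟩)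
    (fun i : Fin (n - 1) => v ⟨(i : ℕ) + 1, by omega⟩) (fun i : Fin (n - 1) => (i : ℕ)) hd hs
  simpa using H

lemma minSkewRank_subsingleton (G : SimpleGraph V) (hss : Subsingleton V) :
    minSkewRank G = 0 := by
  have h0 : IsSkewRep G 0 := by
    constructor
    · ext x y; simp
    · intro i j hij
      exact absurd (Subsingleton.elim i j) hij
  have h1 : minSkewRank G ≤ 0 := Nat.sInf_le ⟨0, h0, Matrix.rank_zero⟩
  omega

lemma minSkewRank_eq {G : SimpleGraph V} {m : ℕ}
    (hub : ∃ A : Matrix V V ℝ, IsSkewRep G A ∧ A.rank ≤ m)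
    (hlb : ∀ A : Matrix V V ℝ, IsSkewRep G A → m ≤ A.rank) : minSkewRank G = m := by
  obtain ⟨A, hA, hAr⟩ := hub
  have h1 : minSkewRank G ≤ A.rank := Nat.sInf_le ⟨A, hA, rfl⟩
  have hne : {r | ∃ A : Matrix V V ℝ, IsSkewRep G A ∧ A.rank = r}.Nonempty :=
    ⟨A.rank, A, hA, rfl⟩
  obtain ⟨B, hB, hBr⟩ := Nat.sInf_mem hne
  have h2 := hlb B hB
  have h3 : B.rank = minSkewRank G := hBr
  omega

lemma minSkewRank_path {n : ℕ} (hn : Odd n) : minSkewRank (pathGraph n) = n - 1 := by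
  apply minSkewRank_eq
  · obtain ⟨A, hA, hAr⟩ := exists_rep_rank_le hn (id : Fin n → Fin n)
      Function.injective_id (fun i j => Iff.rfl) (fun w hw => absurd ⟨w, rfl⟩ hw)
    exact ⟨A, hA, hAr⟩
  · intro A hA
    exact rank_ge_spine hA id Function.injective_id (fun i j => Iff.rfl)

end Work

open Work in
/-- For a tree `T` with diametrical path `Pₙ` (enumerated by `v`, so the
`1`-based vertex `v_i` of the path is `v ⟨i-1⟩`), `n` odd: `mr⁻(T) = mr⁻(Pₙ)`
if and only if `T` is a regular centipede all of whose joints are even-indexed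
vertices of `Pₙ`. -/
theorem minSkewRank_eq_path_iff_odd {V : Type*} [Fintype V] (T : SimpleGraph V)
    (hT : T.IsTree) {n : ℕ} (hn : Odd n) (v : Fin n → V)
    (hv : IsDiametricalPathEnum T v) :
    minSkewRank T = minSkewRank (pathGraph n) ↔
      (IsCentipedeOn T v ∧ IsRegularOn T v ∧
        ∀ i : Fin n, IsJoint T v i → Even (i.val + 1)) := by
  obtain ⟨⟨hvinj, hvadj⟩, hdiam⟩ := hv
  have npos : 0 < n := hn.pos
  rcases eq_or_ne n 1 with hn1 | hn1
  · -- the trivial case `n = 1`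
    subst hn1
    have hdi : T.diam = 0 := by omega
    have hss : Subsingleton V := by
      rcases SimpleGraph.diam_eq_zero.1 hdi with h | h
      · exfalso
        haveI : Nonempty V := ⟨v ⟨0, by omega⟩⟩
        obtain ⟨a, b, hab⟩ := SimpleGraph.exists_edist_eq_ediam_of_finite (G := T)
        rw [h] at hab
        exact (SimpleGraph.edist_ne_top_iff_reachable.2 (hT.isConnected a b)) hab
      · exact h
    constructor
    · intro _
      refine ⟨?_, ?_, ?_⟩
      · intro w hw
        exact (hw ⟨⟨0, by omega⟩, Subsingleton.elim _ _⟩).elim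
      · intro i j hji hjj
        obtain ⟨w, hw, -⟩ := hji
        exact (hw ⟨⟨0, by omega⟩, Subsingleton.elim _ _⟩).elim
      · intro i hi
        obtain ⟨w, hw, -⟩ := hi
        exact (hw ⟨⟨0, by omega⟩, Subsingleton.elim _ _⟩).elim
    · intro _
      rw [minSkewRank_subsingleton T hss,
        minSkewRank_subsingleton (pathGraph 1) inferInstance]
  · -- the main case `n ≥ 3`
    have hn3 : 3 ≤ n := by rcases hn with ⟨k, hk⟩; omega
    obtain ⟨k, hk⟩ := hn
    have hnk : n = 2 * k + 1 := by omega
    have hpath : minSkewRank (pathGraph n) = n - 1 := minSkewRank_path ⟨k, hk⟩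
    rw [hpath]
    constructor
    · intro hEq
      have hne : {r | ∃ A : Matrix V V ℝ, IsSkewRep T A ∧ A.rank = r}.Nonempty := by
        by_contra hcon
        rw [Set.not_nonempty_iff_eq_empty] at hcon
        have h0 : minSkewRank T = 0 := by
          show sInf _ = 0
          rw [hcon]
          exact Nat.sInf_empty
        omega
      obtain ⟨B, hB, hBr⟩ := Nat.sInf_mem hne
      have hBr' : B.rank = n - 1 := by
        have h3 : B.rank = minSkewRank T := hBr
        omega
      -- no edges between two off-spine vertices
      have noD : ∀ u w : V, u ∉ Set.range v → w ∉ Set.range v → ¬ T.Adj u w := by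
        intro u w hu hw hadjuw
        have := case1_rank hT hnk hvinj hvadj hu hw hadjuw hB
        omega
      -- `T` is a centipede on `v`
      have hcent : IsCentipedeOn T v := by
        intro w hw
        have hwv0 : w ≠ v ⟨0, by omega⟩ := fun h => hw (h ▸ ⟨_, rfl⟩)
        obtain ⟨x, hx⟩ := exists_nbr hT hwv0
        have hxr : x ∈ Set.range v := by
          by_contra hxr
          exact noD w x hw hxr hx
        obtain ⟨i0, rfl⟩ := hxr
        have hi0a : (i0 : ℕ) ≠ 0 := by
          intro h0
          apply endpoint_attach hT (by omega) hvinj hvadj hdiam hw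
          left
          have he0 : (⟨0, by omega⟩ : Fin n) = i0 := Fin.ext h0.symm
          rw [he0]
          exact hx
        have hi0b : (i0 : ℕ) ≠ n - 1 := by
          intro h0
          apply endpoint_attach hT (by omega) hvinj hvadj hdiam hw
          right
          have he0 : (⟨n - 1, by omega⟩ : Fin n) = i0 := Fin.ext h0.symm
          rw [he0]
          exact hx
        have hset : T.neighborSet w = {v i0} := by
          ext z
          simp only [SimpleGraph.mem_neighborSet, Set.mem_singleton_iff]
          constructor
          · intro hz
            have hzr : z ∈ Set.range v := by
              by_contra hzr
              exact noD w z hw hzr hz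
            obtain ⟨j0, rfl⟩ := hzr
            by_contra hne'
            have hij : (i0 : ℕ) ≠ (j0 : ℕ) := fun h => hne' (congrArg v (Fin.ext h.symm))
            rcases Nat.lt_or_ge (i0 : ℕ) (j0 : ℕ) with hlt | hge
            · exact (no_two_spine_nbrs hT hvinj hvadj hw hlt hx hz).elim
            · have hlt' : (j0 : ℕ) < (i0 : ℕ) := by omega
              exact (no_two_spine_nbrs hT hvinj hvadj hw hlt' hz hx).elim
          · rintro rfl
            exact hx
        constructor
        · rw [hset]
          exact Set.ncard_singleton _
        · exact ⟨i0, hx, hi0a, hi0b⟩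
      have hjoints : ∀ i : Fin n, IsJoint T v i → Even ((i : ℕ) + 1) := by
        intro i hji
        obtain ⟨w, hw, hadj_iw⟩ := hji
        by_contra hodd
        have heven : Even (i : ℕ) := by
          rcases Nat.even_or_odd (i : ℕ) with h | h
          · exact h
          · rcases h with ⟨r, hr⟩
            exact absurd ⟨r + 1, by omega⟩ hodd
        obtain ⟨hncard, i', hadj', hi1, hi2⟩ := hcent w hw
        have hvv : v i' = v i := by
          obtain ⟨a, ha⟩ := Set.ncard_eq_one.1 hncard
          have m1 : v i' ∈ T.neighborSet w := hadj'
          have m2 : v i ∈ T.neighborSet w := hadj_iw.symm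
          rw [ha, Set.mem_singleton_iff] at m1 m2
          rw [m1, m2]
        have hii : (i' : ℕ) = (i : ℕ) := congrArg Fin.val (hvinj hvv)
        obtain ⟨h, hh⟩ := heven
        have hh1 : 1 ≤ h := by omega
        have hh2 : h + h ≤ n - 3 := by
          have := i.2
          omega
        have hadjw : T.Adj (v ⟨h + h, by omega⟩) w := by
          have he0 : (⟨h + h, by omega⟩ : Fin n) = i := Fin.ext (show h + h = (i:ℕ) by omega)
          rw [he0]
          exact hadj_iw
        have := case2_rank hT hnk hvinj hvadj hw hh1 hh2 hadjw hB
        omega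
      refine ⟨hcent, ?_, hjoints⟩
      intro i j hji hjj heq
      obtain ⟨a, ha⟩ := hjoints i hji
      obtain ⟨b, hb⟩ := hjoints j hjj
      omega
    · rintro ⟨hcent, -, hjoint⟩
      have hoff : ∀ w : V, w ∉ Set.range v → (T.neighborSet w).ncard = 1 ∧
          ∃ i : Fin n, T.Adj w (v i) ∧ Odd (i : ℕ) := by
        intro w hw
        obtain ⟨hncard, i, hadj', hi1, hi2⟩ := hcent w hw
        refine ⟨hncard, i, hadj', ?_⟩
        obtain ⟨r, hr⟩ := hjoint i ⟨w, hw, hadj'.symm⟩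
        exact ⟨r - 1, by omega⟩
      obtain ⟨A, hA, hAr⟩ := exists_rep_rank_le ⟨k, hk⟩ v hvinj hvadj hoff
      apply minSkewRank_eq ⟨A, hA, hAr⟩
      intro B hB
      exact rank_ge_spine hB v hvinj hvadj
end
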